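/- arXiv:1504.02924 — 10 statements merged into one kernel-verified Lean document; each statement's English description precedes it below -/
import Mathlib

section
/- Let E be a real Banach space and let 𝓚 ⊆ E be a nonempty closed convex set. For every y ∈ 𝓚 the two descriptions of the tangent cone coincide: closure(⋃_{h>0} {h⁻¹ • (k − y) : k ∈ 𝓚}) = {v ∈ E : the quotient d(y + h•v, 𝓚)/h tends to 0 as h → 0⁺}, where d(z, 𝓚) denotes the infimum distance from z to 𝓚. -/
/-!
Write `C h = h⁻¹ • (𝓚 - y)`. Rescaling by `h` gives `d(y + h • v, 𝓚) / h = d(v, C h)`. Since `𝓚` is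
convex and contains `y`, the sets `C h` grow as `h` decreases to `0`, so `d(v, C h)` tends to the
distance from `v` to their union `⋃ h > 0, C h` as `h → 0⁺`. The quotient therefore tends to `0`
exactly when `v` lies at distance `0` from that union, i.e. in its closure.
-/

open Filter Metric Set Topology Pointwise

section

variable {E : Type*} [NormedAddCommGroup E] [NormedSpace ℝ E]

def diffQuotientSet (K : Set E) (y : E) (h : ℝ) : Set E :=
  (fun k => h⁻¹ • (k - y)) '' K

lemma diffQuotientSet_eq_smul (K : Set E) (y : E) (h : ℝ) :
    diffQuotientSet K y h = h⁻¹ • ((· - y) '' K) := by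
  rw [diffQuotientSet, ← image_smul, image_image]

lemma infDist_add_smul_div_eq_infDist_diffQuotientSet (K : Set E) (y v : E) {h : ℝ}
    (hh : 0 < h) : infDist (y + h • v) K / h = infDist v (diffQuotientSet K y h) := by
  have htrans : infDist (h • v) ((· - y) '' K) = infDist (y + h • v) K := by
    simpa using infDist_image (x := y + h • v) (t := K) (IsometryEquiv.subRight y).isometry
  calc infDist (y + h • v) K / h = ‖h⁻¹‖ * infDist (h • v) ((· - y) '' K) := by
        rw [htrans, Real.norm_of_nonneg (inv_pos.2 hh).le, inv_mul_eq_div]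
    _ = infDist (h⁻¹ • h • v) (h⁻¹ • ((· - y) '' K)) :=
        (infDist_smul₀ (inv_ne_zero hh.ne') _ _).symm
    _ = infDist v (diffQuotientSet K y h) := by
        rw [inv_smul_smul₀ hh.ne', diffQuotientSet_eq_smul]

lemma diffQuotientSet_subset_of_le {K : Set E} (hK : Convex ℝ K) {y : E} (hy : y ∈ K) {h h' : ℝ}
    (hh' : 0 < h') (hle : h' ≤ h) : diffQuotientSet K y h ⊆ diffQuotientSet K y h' := by
  rintro _ ⟨k, hk, rfl⟩
  have hh : 0 < h := hh'.trans_le hle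
  refine ⟨y + (h' / h) • (k - y), hK.add_smul_sub_mem hy hk ⟨by positivity, ?_⟩, ?_⟩
  · exact (div_le_one hh).2 hle
  · simp only [add_sub_cancel_left, smul_smul]
    rw [div_eq_mul_inv, ← mul_assoc, inv_mul_cancel₀ hh'.ne', one_mul]

lemma tendsto_infDist_diffQuotientSet {K : Set E} (hK : Convex ℝ K) {y : E} (hy : y ∈ K) (v : E) :
    Tendsto (fun h => infDist v (diffQuotientSet K y h)) (𝓝[>] 0)
      (𝓝 (infDist v (⋃ h ∈ Ioi (0 : ℝ), diffQuotientSet K y h))) := by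
  set U := ⋃ h ∈ Ioi (0 : ℝ), diffQuotientSet K y h
  have hne : ∀ h, (diffQuotientSet K y h).Nonempty := fun h => ⟨_, y, hy, rfl⟩
  have hsub : ∀ h ∈ Ioi (0 : ℝ), diffQuotientSet K y h ⊆ U := fun h hh =>
    subset_biUnion_of_mem (u := fun h => diffQuotientSet K y h) hh
  refine tendsto_order.2 ⟨fun a ha => ?_, fun b hb => ?_⟩
  · filter_upwards [self_mem_nhdsWithin] with h hh
    exact ha.trans_le (infDist_le_infDist_of_subset (hsub h hh) (hne h))
  · obtain ⟨z, hzU, hz⟩ := (infDist_lt_iff ((hne 1).mono (hsub 1 (mem_Ioi.2 one_pos)))).1 hb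
    obtain ⟨h₀, hh₀, hz₀⟩ := mem_iUnion₂.1 hzU
    filter_upwards [Ioo_mem_nhdsGT (show (0 : ℝ) < h₀ from hh₀)] with h hh
    exact (infDist_le_dist_of_mem (diffQuotientSet_subset_of_le hK hy hh.1 hh.2.le hz₀)).trans_lt hz

end

theorem tangent_cone_eq_limit_description_general
    {E : Type*} [NormedAddCommGroup E] [NormedSpace ℝ E]
    (𝓚 : Set E) (hconv : Convex ℝ 𝓚)
    (y : E) (hy : y ∈ 𝓚) :
    closure (⋃ h ∈ Set.Ioi (0:ℝ), (fun k => h⁻¹ • (k - y)) '' 𝓚) =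
      {v : E | Filter.Tendsto (fun h : ℝ => Metric.infDist (y + h • v) 𝓚 / h)
        (nhdsWithin 0 (Set.Ioi 0)) (nhds 0)} := by
  change closure (⋃ h ∈ Ioi (0 : ℝ), diffQuotientSet 𝓚 y h) = _
  have hne : (⋃ h ∈ Ioi (0 : ℝ), diffQuotientSet 𝓚 y h).Nonempty :=
    ⟨0, mem_iUnion₂.2 ⟨1, mem_Ioi.2 one_pos, y, hy, by simp⟩⟩
  ext v
  have hquot : (fun h => infDist v (diffQuotientSet 𝓚 y h)) =ᶠ[𝓝[>] 0]
      fun h => infDist (y + h • v) 𝓚 / h := by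
    filter_upwards [self_mem_nhdsWithin] with h hh
    exact (infDist_add_smul_div_eq_infDist_diffQuotientSet 𝓚 y v hh).symm
  have hlim := (tendsto_infDist_diffQuotientSet hconv hy v).congr' hquot
  rw [mem_closure_iff_infDist_zero hne, mem_ofPred_eq]
  exact ⟨fun h0 => by rwa [h0] at hlim, fun h0 => tendsto_nhds_unique hlim h0⟩

/-- In a real Banach space, for a nonempty closed convex set `𝓚` and a point
`y ∈ 𝓚`, the two descriptions of the tangent cone coincide:
`cl (⋃_{h>0} h⁻¹ • (𝓚 - y)) = {v | d(y + h•v, 𝓚)/h → 0 as h → 0⁺}`. -/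
theorem tangent_cone_eq_limit_description
    {E : Type*} [NormedAddCommGroup E] [NormedSpace ℝ E] [CompleteSpace E]
    (𝓚 : Set E) (hne : 𝓚.Nonempty) (hcl : IsClosed 𝓚) (hconv : Convex ℝ 𝓚)
    (y : E) (hy : y ∈ 𝓚) :
    closure (⋃ h ∈ Set.Ioi (0:ℝ), (fun k => h⁻¹ • (k - y)) '' 𝓚) =
      {v : E | Filter.Tendsto (fun h : ℝ => Metric.infDist (y + h • v) 𝓚 / h)
        (nhdsWithin 0 (Set.Ioi 0)) (nhds 0)} :=
  tangent_cone_eq_limit_description_general 𝓚 hconv y hy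
end

section
/- Let K be a nonempty closed convex subset of Euclidean space ℝ^N. Then K = ⋂_{y ∈ K} (y + T_K(y)), where T_K(y) := closure(⋃_{h>0} {h⁻¹ • (k − y) : k ∈ K}) is the tangent cone to K at y. That is, a point x ∈ ℝ^N belongs to K if and only if x − y ∈ T_K(y) for every y ∈ K. -/
open Set RealInnerProductSpace

/-!
If `x ∉ K`, let `v` be the nearest point of `K` to `x`. Then `⟪x - v, k - v⟫ ≤ 0` for all
`k ∈ K`, so the tangent cone `T_K(v)` lies in the closed half-space `{z | ⟪x - v, z⟫ ≤ 0}`,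
which does not contain `x - v ≠ 0`.
-/

/-- The tangent cone `T_K(y)` of the paper. -/
def convexTangentCone {E : Type*} [TopologicalSpace E] [AddCommGroup E] [Module ℝ E]
    (K : Set E) (y : E) : Set E :=
  closure (⋃ h ∈ Ioi (0 : ℝ), (fun k => h⁻¹ • (k - y)) '' K)

theorem sub_mem_convexTangentCone {E : Type*} [TopologicalSpace E] [AddCommGroup E]
    [Module ℝ E] {K : Set E} {x : E} (hx : x ∈ K) (y : E) :
    x - y ∈ convexTangentCone K y :=
  subset_closure <| mem_biUnion (show (1 : ℝ) ∈ Ioi 0 from mem_Ioi.mpr one_pos) ⟨x, hx, by simp⟩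

section InnerProductSpace

variable {E : Type*} [NormedAddCommGroup E] [InnerProductSpace ℝ E]

theorem convexTangentCone_subset_inner_nonpos {K : Set E} {u y : E}
    (h : ∀ k ∈ K, ⟪u, k - y⟫ ≤ 0) : convexTangentCone K y ⊆ {z | ⟪u, z⟫ ≤ 0} := by
  have hclosed : IsClosed {z : E | ⟪u, z⟫ ≤ 0} :=
    isClosed_le (continuous_const.inner continuous_id) continuous_const
  refine hclosed.closure_subset_iff.mpr ?_
  simp only [subset_def, mem_iUnion, mem_image]
  rintro _ ⟨c, hc, k, hk, rfl⟩
  rw [mem_ofPred_eq, real_inner_smul_right]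
  exact mul_nonpos_of_nonneg_of_nonpos (inv_nonneg.mpr (le_of_lt hc)) (h k hk)

theorem mem_iff_forall_sub_mem_convexTangentCone {K : Set E} (hne : K.Nonempty)
    (hcomplete : IsComplete K) (hconv : Convex ℝ K) (x : E) :
    x ∈ K ↔ ∀ y ∈ K, x - y ∈ convexTangentCone K y := by
  refine ⟨fun hx y _ => sub_mem_convexTangentCone hx y, fun H => ?_⟩
  obtain ⟨v, hvK, hv⟩ := exists_norm_eq_iInf_of_complete_convex hne hcomplete hconv x
  have hproj : ∀ k ∈ K, ⟪x - v, k - v⟫ ≤ 0 :=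
    (norm_eq_iInf_iff_real_inner_le_zero hconv hvK).mp hv
  have hxv : ⟪x - v, x - v⟫ ≤ 0 := convexTangentCone_subset_inner_nonpos hproj (H v hvK)
  rwa [sub_eq_zero.mp (real_inner_self_nonpos.mp hxv)]

end InnerProductSpace

/-- A nonempty closed convex set `K ⊆ ℝ^N` equals the intersection
`⋂_{y ∈ K} (y + T_K(y))` of the translated tangent cones: a point `x` belongs to `K` if and
only if `x - y ∈ T_K(y)` for every `y ∈ K`, where
`T_K(y) = cl (⋃_{h>0} h⁻¹ • (K - y))`. -/
theorem mem_closed_convex_iff_sub_mem_tangent_cone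
    {N : ℕ} (K : Set (EuclideanSpace ℝ (Fin N))) (hne : K.Nonempty)
    (hcl : IsClosed K) (hconv : Convex ℝ K) (x : EuclideanSpace ℝ (Fin N)) :
    x ∈ K ↔ ∀ y ∈ K,
      x - y ∈ closure (⋃ h ∈ Set.Ioi (0:ℝ), (fun k => h⁻¹ • (k - y)) '' K) :=
  mem_iff_forall_sub_mem_convexTangentCone hne hcl.isComplete hconv x
end

section
/- Let E be a real Banach space, let (S(t))_{t≥0} be a C₀-semigroup on E, and let 𝓚 ⊆ E be a nonempty closed convex set which is semigroup invariant, i.e., S(t)(𝓚) ⊆ 𝓚 for every t ≥ 0. Then for every x ∈ 𝓚 one has T_𝓚(x) ⊆ T^A_𝓚(x), where T_𝓚(x) := closure(⋃_{h>0} {h⁻¹ • (k − x) : k ∈ 𝓚}) and T^A_𝓚(x) := {v ∈ E : liminf_{t→0⁺} d(S(t)x + t•v, 𝓚)/t = 0}. -/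
/-!
For `w = h⁻¹ • (k - x)` with `k ∈ 𝓚` and `0 < t ≤ h`, the point `S t (x + (t / h) • (k - x))`
lies in `𝓚` by convexity and invariance, and its distance to `S t x + t • w` is
`(t / h) • ‖(k - x) - S t (k - x)‖`; so `d(S t x + t • w, 𝓚) / t → 0` by strong continuity at
`0`. Since `v ↦ d(S t x + t • v, 𝓚) / t` is `1`-Lipschitz for every `t`, the set of `v` for
which this quotient tends to `0` is closed, hence contains the whole tangent cone.
-/

open Filter Metric Set Topology

section

variable {E : Type*} [NormedAddCommGroup E] [NormedSpace ℝ E]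

theorem lipschitzWith_infDist_add_smul_div (s : Set E) (a : E) (t : ℝ) :
    LipschitzWith 1 fun v : E => infDist (a + t • v) s / t := by
  refine LipschitzWith.of_dist_le_mul fun v w => ?_
  rcases eq_or_ne t 0 with rfl | ht
  · simp
  calc dist (infDist (a + t • v) s / t) (infDist (a + t • w) s / t)
      = dist (infDist (a + t • v) s) (infDist (a + t • w) s) / |t| := by
        rw [Real.dist_eq, Real.dist_eq, ← sub_div, abs_div]
    _ ≤ dist (a + t • v) (a + t • w) / |t| := by
        gcongr
        simpa using (lipschitz_infDist_pt (s := s)).dist_le_mul (a + t • v) (a + t • w)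
    _ = 1 * dist v w := by
        rw [dist_add_left, dist_smul₀, Real.norm_eq_abs]
        field_simp

theorem isClosed_setOf_tendsto_infDist_add_smul_div (s : Set E) (p : ℝ → E) (l : Filter ℝ) :
    IsClosed {v : E | Tendsto (fun t => infDist (p t + t • v) s / t) l (𝓝 0)} :=
  (LipschitzWith.uniformEquicontinuous _ 1 fun t =>
    lipschitzWith_infDist_add_smul_div s (p t) t).equicontinuous.isClosed_setOfPred_tendsto
    continuous_const

theorem Convex.infDist_map_add_smul_div_le {K : Set E} (hK : Convex ℝ K) {T : E →L[ℝ] E}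
    (hT : MapsTo T K K) {x k : E} (hx : x ∈ K) (hk : k ∈ K) {t h : ℝ} (ht : 0 < t)
    (hth : t ≤ h) :
    infDist (T x + t • h⁻¹ • (k - x)) K / t ≤ h⁻¹ * ‖k - x - T (k - x)‖ := by
  have hh : 0 < h := ht.trans_le hth
  set b := t / h
  have hb : 0 ≤ b := by positivity
  have hmem : T (x + b • (k - x)) ∈ K := by
    refine hT ?_
    convert hK hx hk (by linarith [(div_le_one hh).mpr hth] : 0 ≤ 1 - b) hb (by ring) using 1
    module
  have hdiff : T x + t • h⁻¹ • (k - x) - T (x + b • (k - x)) = b • (k - x - T (k - x)) := by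
    rw [smul_smul, map_add, map_smul]
    simp only [b, div_eq_mul_inv]
    module
  calc infDist (T x + t • h⁻¹ • (k - x)) K / t
      ≤ ‖b • (k - x - T (k - x))‖ / t := by
        gcongr
        rw [← hdiff, ← dist_eq_norm]
        exact infDist_le_dist_of_mem hmem
    _ = h⁻¹ * ‖k - x - T (k - x)‖ := by
        rw [norm_smul, Real.norm_of_nonneg hb]
        simp only [b]
        field_simp

theorem tendsto_infDist_add_smul_inv_smul_sub_div {K : Set E} (hK : Convex ℝ K)
    {S : ℝ → E →L[ℝ] E} (hinv : ∀ t, 0 < t → MapsTo (S t) K K)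
    (hS : ∀ y, Tendsto (fun t => S t y) (𝓝[>] 0) (𝓝 y)) {x k : E} (hx : x ∈ K) (hk : k ∈ K)
    {h : ℝ} (hh : 0 < h) :
    Tendsto (fun t => infDist (S t x + t • h⁻¹ • (k - x)) K / t) (𝓝[>] 0) (𝓝 0) := by
  have hbound : Tendsto (fun t => h⁻¹ * ‖k - x - S t (k - x)‖) (𝓝[>] 0) (𝓝 0) := by
    simpa using (((tendsto_const_nhds (x := k - x)).sub (hS (k - x))).norm.const_mul h⁻¹)
  refine squeeze_zero' ?_ ?_ hbound
  · filter_upwards [self_mem_nhdsWithin] with t ht using div_nonneg infDist_nonneg (le_of_lt ht)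
  · filter_upwards [Ioc_mem_nhdsGT hh] with t ht
    exact hK.infDist_map_add_smul_div_le (hinv t ht.1) hx hk ht.1 ht.2

end

theorem tangent_cone_subset_pavel_cone_general
    {E : Type*} [NormedAddCommGroup E] [NormedSpace ℝ E]
    (S : ℝ → E →L[ℝ] E)
    (hS0 : S 0 = ContinuousLinearMap.id ℝ E)
    (hScont : ∀ x : E, ContinuousOn (fun t => S t x) (Set.Ici (0:ℝ)))
    (𝓚 : Set E) (hconv : Convex ℝ 𝓚)
    (hinv : ∀ t : ℝ, 0 ≤ t → ∀ x ∈ 𝓚, S t x ∈ 𝓚)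
    (x : E) (hx : x ∈ 𝓚) :
    closure (⋃ h ∈ Set.Ioi (0:ℝ), (fun k => h⁻¹ • (k - x)) '' 𝓚) ⊆
      {v : E | Filter.liminf (fun t : ℝ => Metric.infDist (S t x + t • v) 𝓚 / t)
        (nhdsWithin 0 (Set.Ioi 0)) = 0} := by
  have hS : ∀ y, Tendsto (fun t => S t y) (𝓝[>] 0) (𝓝 y) := fun y => by
    simpa [hS0] using
      (hScont y 0 self_mem_Ici).tendsto.mono_left (nhdsWithin_mono _ Ioi_subset_Ici_self)
  have hcone : ⋃ h ∈ Ioi (0:ℝ), (fun k => h⁻¹ • (k - x)) '' 𝓚 ⊆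
      {v | Tendsto (fun t => infDist (S t x + t • v) 𝓚 / t) (𝓝[>] 0) (𝓝 0)} := by
    simp only [iUnion_subset_iff, mem_Ioi, image_subset_iff]
    intro h hh k hk
    exact tendsto_infDist_add_smul_inv_smul_sub_div hconv (fun t ht y hy => hinv t ht.le y hy)
      hS hx hk hh
  exact (closure_minimal hcone (isClosed_setOf_tendsto_infDist_add_smul_div _ _ _)).trans
    fun v hv => hv.liminf_eq

/-- If `(S(t))_{t ≥ 0}` is a `C₀`-semigroup on a real Banach space leaving a
nonempty closed convex set `𝓚` invariant, then for every `x ∈ 𝓚` the tangent cone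
`T_𝓚(x) = cl (⋃_{h>0} h⁻¹ • (𝓚 - x))` is contained in the Pavel tangent cone
`T^A_𝓚(x) = {v | liminf_{t→0⁺} d(S(t)x + t•v, 𝓚)/t = 0}`. -/
theorem tangent_cone_subset_pavel_cone
    {E : Type*} [NormedAddCommGroup E] [NormedSpace ℝ E] [CompleteSpace E]
    (S : ℝ → E →L[ℝ] E)
    (hS0 : S 0 = ContinuousLinearMap.id ℝ E)
    (hSadd : ∀ s t : ℝ, 0 ≤ s → 0 ≤ t → S (t + s) = (S t).comp (S s))
    (hScont : ∀ x : E, ContinuousOn (fun t => S t x) (Set.Ici (0:ℝ)))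
    (𝓚 : Set E) (hne : 𝓚.Nonempty) (hcl : IsClosed 𝓚) (hconv : Convex ℝ 𝓚)
    (hinv : ∀ t : ℝ, 0 ≤ t → ∀ x ∈ 𝓚, S t x ∈ 𝓚)
    (x : E) (hx : x ∈ 𝓚) :
    closure (⋃ h ∈ Set.Ioi (0:ℝ), (fun k => h⁻¹ • (k - x)) '' 𝓚) ⊆
      {v : E | Filter.liminf (fun t : ℝ => Metric.infDist (S t x + t • v) 𝓚 / t)
        (nhdsWithin 0 (Set.Ioi 0)) = 0} :=
  tangent_cone_subset_pavel_cone_general S hS0 hScont 𝓚 hconv hinv x hx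
end

section
/- Let E be a real Banach space and let (S(t))_{t≥0} be a compact C₀-semigroup on E. Define, for a Bochner integrable function y : [0,1] → E, K₀(y)(t) := ∫₀ᵗ S(t−s) y(s) ds for t ∈ [0,1]. Then each K₀(y) is a continuous function [0,1] → E, and for every integrably bounded set 𝔄 of Bochner integrable functions [0,1] → E (i.e., there exists an integrable λ : [0,1] → ℝ with ‖y(t)‖ ≤ λ(t) for a.e. t ∈ [0,1] and all y ∈ 𝔄), the image {K₀(y) : y ∈ 𝔄} is relatively compact in the space C([0,1],E) of continuous functions with the supremum metric. -/
/-!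
Extend `S` from `[0, 1]` to `T : ℝ → E →L[ℝ] E` by `Set.IccExtend`. By Banach–Steinhaus `T` is
uniformly bounded, hence jointly continuous in `(t, x)`, so the integrands `s ↦ T (t - s) (y s)`
are integrable. The semigroup law gives
`K y t' = T (t' - t) (K y t) + ∫ s in t..t', T (t' - s) (y s)`, and integrable boundedness makes
the last integral small, uniformly in `y ∈ 𝔄`, once `t' - t` is small. With `t' - t = δ` this puts
every value `K y t` within `ε` of the relatively compact set `T δ '' closedBall 0 R ∪ {0}`, so the
values form a totally bounded set `V`; as `t' - t → 0`, the convergence `T h → id`, uniform on the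
compact set `closure V`, gives equicontinuity. Arzelà–Ascoli concludes, and the continuity of a
single `K y` is the case `𝔄 = {y}`.
-/

open MeasureTheory Set

section StronglyContinuous

variable {𝕜 X E F : Type*} [NontriviallyNormedField 𝕜] [TopologicalSpace X]
  [NormedAddCommGroup E] [NormedSpace 𝕜 E] [NormedAddCommGroup F] [NormedSpace 𝕜 F]

theorem IsCompact.exists_forall_norm_le_of_continuousOn_apply [CompleteSpace E] {K : Set X}
    (hK : IsCompact K) {T : X → E →L[𝕜] F} (hT : ∀ x, ContinuousOn (fun t => T t x) K) :
    ∃ C, ∀ t ∈ K, ‖T t‖ ≤ C := by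
  obtain ⟨C, hC⟩ := banach_steinhaus (g := fun t : K => T t) fun x =>
    (hK.exists_bound_of_continuousOn (hT x)).imp fun _ hC t => hC t t.2
  exact ⟨C, fun t ht => hC ⟨t, ht⟩⟩

theorem continuous_uncurry_of_continuous_apply {T : X → E →L[𝕜] F} {M : ℝ}
    (hT : ∀ x, Continuous fun t => T t x) (hM : ∀ t, ‖T t‖ ≤ M) :
    Continuous fun p : X × E => T p.1 p.2 := by
  refine continuous_prod_of_continuous_lipschitzWith' _ M.toNNReal (fun t => ?_) hT
  refine LipschitzWith.of_dist_le_mul fun x x' => ?_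
  rw [dist_eq_norm, dist_eq_norm, ← map_sub,
    Real.coe_toNNReal _ ((norm_nonneg _).trans (hM t))]
  exact (T t).le_of_opNorm_le (hM t) _

end StronglyContinuous

theorem Metric.totallyBounded_of_forall_subset_thickening {α : Type*} [PseudoMetricSpace α]
    {s : Set α} (h : ∀ ε > 0, ∃ t, TotallyBounded t ∧ s ⊆ thickening ε t) :
    TotallyBounded s := by
  refine Metric.totallyBounded_iff.2 fun ε hε => ?_
  obtain ⟨t, ht, hst⟩ := h (ε / 2) (half_pos hε)
  obtain ⟨N, hN, htN⟩ := Metric.totallyBounded_iff.1 ht (ε / 2) (half_pos hε)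
  refine ⟨N, hN, fun x hx => ?_⟩
  obtain ⟨z, hz, hxz⟩ := mem_thickening_iff.1 (hst hx)
  obtain ⟨w, hw, hzw⟩ := mem_iUnion₂.1 (htN hz)
  refine mem_iUnion₂.2 ⟨w, hw, ?_⟩
  calc dist x w ≤ dist x z + dist z w := dist_triangle _ _ _
    _ < ε / 2 + ε / 2 := add_lt_add hxz hzw
    _ = ε := add_halves ε

theorem ContinuousMap.isCompact_closure_of_equicontinuous {X Y : Type*} [TopologicalSpace X]
    [CompactSpace X] [MetricSpace Y] {K : Set Y} (hK : IsCompact K) {A : Set C(X, Y)}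
    (hAK : ∀ f ∈ A, ∀ x, f x ∈ K) (hA : Equicontinuous ((↑) : A → X → Y)) :
    IsCompact (closure A) := by
  let e := (ContinuousMap.isometryEquivBoundedOfCompact X Y).toHomeomorph
  have : IsCompact (closure (e '' A)) := by
    refine BoundedContinuousFunction.arzela_ascoli K hK _
      (by rintro _ x ⟨f, hf, rfl⟩; exact hAK f hf x) ?_
    exact hA.comp fun f : e '' A =>
      ⟨e.symm f, by obtain ⟨g, hg, hgf⟩ := f.2; simpa [← hgf] using hg⟩
  rwa [← e.image_closure, e.isCompact_image] at this

theorem IntervalIntegrable.exists_pos_forall_norm_integral_lt {G : Type*} [NormedAddCommGroup G]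
    [NormedSpace ℝ G] {f : ℝ → G} {c d : ℝ} (hf : IntervalIntegrable f volume c d) {ε : ℝ}
    (hε : 0 < ε) : ∃ δ > 0, ∀ a ∈ uIcc c d, ∀ b ∈ uIcc c d, dist a b ≤ δ →
      ‖∫ s in a..b, f s‖ < ε := by
  have hF := (isCompact_uIcc.uniformContinuousOn_of_continuous
    (intervalIntegral.continuousOn_primitive_interval' hf left_mem_uIcc))
  obtain ⟨δ, hδ, h⟩ := Metric.uniformContinuousOn_iff.1 hF ε hε
  refine ⟨δ / 2, half_pos hδ, fun a ha b hb hab => ?_⟩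
  have hfa := hf.mono_set (uIcc_subset_uIcc left_mem_uIcc ha)
  have hfb := hf.mono_set (uIcc_subset_uIcc left_mem_uIcc hb)
  have := h b hb a ha (by rw [dist_comm]; linarith)
  rwa [dist_eq_norm, intervalIntegral.integral_interval_sub_left hfb hfa] at this

section Duhamel

variable {E : Type*} [NormedAddCommGroup E] [NormedSpace ℝ E]
  {T : ℝ → E →L[ℝ] E} {M : ℝ} {y : ℝ → E}

noncomputable def duhamel (T : ℝ → E →L[ℝ] E) (y : ℝ → E) (t : ℝ) : E :=
  ∫ s in (0:ℝ)..t, T (t - s) (y s)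

theorem intervalIntegrable_apply_sub (hT : ∀ x, Continuous fun t => T t x)
    (hM : ∀ t, ‖T t‖ ≤ M) {a b : ℝ} (hy : IntervalIntegrable y volume a b) (t : ℝ) :
    IntervalIntegrable (fun s => T (t - s) (y s)) volume a b := by
  have key : ∀ {μ : Measure ℝ}, Integrable y μ → Integrable (fun s => T (t - s) (y s)) μ :=
    fun hy => (hy.norm.const_mul M).mono'
      ((continuous_uncurry_of_continuous_apply hT hM).comp_aestronglyMeasurable
        ((continuous_const.sub continuous_id).aestronglyMeasurable.prodMk hy.1))
      (ae_of_all _ fun s => (T _).le_of_opNorm_le (hM _) _)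
  exact ⟨key hy.1, key hy.2⟩

theorem norm_integral_apply_sub_le (hM : ∀ t, ‖T t‖ ≤ M) {a b : ℝ} (hab : a ≤ b) {g : ℝ → ℝ}
    (hg : IntegrableOn g (Ioc a b)) (hy : ∀ᵐ s ∂volume.restrict (Ioc a b), ‖y s‖ ≤ g s)
    (t : ℝ) : ‖∫ s in a..b, T (t - s) (y s)‖ ≤ M * ∫ s in a..b, g s := by
  rw [intervalIntegral.integral_of_le hab, intervalIntegral.integral_of_le hab,
    ← integral_const_mul]
  refine norm_integral_le_of_norm_le (hg.const_mul M) ?_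
  filter_upwards [hy] with s hs
  exact ((T _).le_of_opNorm_le (hM _) _).trans
    (mul_le_mul_of_nonneg_left hs ((norm_nonneg _).trans (hM 0)))

theorem duhamel_eq_apply_add [CompleteSpace E] (hT : ∀ x, Continuous fun t => T t x)
    (hM : ∀ t, ‖T t‖ ≤ M)
    (hTadd : ∀ a b, 0 ≤ a → 0 ≤ b → a + b ≤ 1 → T (a + b) = (T a).comp (T b))
    (hy : IntegrableOn y (Icc 0 1)) {t t' : ℝ} (ht : 0 ≤ t) (htt' : t ≤ t') (ht' : t' ≤ 1) :
    duhamel T y t' = T (t' - t) (duhamel T y t) + ∫ s in t..t', T (t' - s) (y s) := by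
  have hy' : ∀ {a b : ℝ}, 0 ≤ a → a ≤ b → b ≤ 1 → IntervalIntegrable y volume a b :=
    fun ha hab hb =>
      (intervalIntegrable_iff_integrableOn_Icc_of_le hab).2 (hy.mono_set (Icc_subset_Icc ha hb))
  have hy₁ := hy' le_rfl ht (htt'.trans ht')
  have hy₂ := hy' ht htt' ht'
  rw [duhamel, duhamel, ← intervalIntegral.integral_add_adjacent_intervals
    (intervalIntegrable_apply_sub hT hM hy₁ t') (intervalIntegrable_apply_sub hT hM hy₂ t'),
    ← (T (t' - t)).intervalIntegral_comp_comm (intervalIntegrable_apply_sub hT hM hy₁ t)]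
  congr 1
  refine intervalIntegral.integral_congr fun s hs => ?_
  rw [uIcc_of_le ht] at hs
  have hsplit : t' - s = (t' - t) + (t - s) := by ring
  simp only [hsplit, hTadd _ _ (sub_nonneg.2 htt') (sub_nonneg.2 hs.2) (by linarith [hs.1]),
    ContinuousLinearMap.comp_apply]

theorem duhamel_IccExtend (S : ℝ → E →L[ℝ] E) (y : ℝ → E) {t : ℝ} (ht : t ∈ Icc (0:ℝ) 1) :
    duhamel (IccExtend zero_le_one fun u : Icc (0:ℝ) 1 => S u) y t =
      ∫ s in (0:ℝ)..t, S (t - s) (y s) := by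
  refine intervalIntegral.integral_congr fun s hs => ?_
  rw [uIcc_of_le ht.1] at hs
  simp only [IccExtend_of_mem _ _ (⟨by linarith [hs.2], by linarith [hs.1, ht.2]⟩ :
    t - s ∈ Icc (0:ℝ) 1)]

end Duhamel

section IntegrablyBoundedFamily

variable {E : Type*} [NormedAddCommGroup E] [NormedSpace ℝ E]
  {T : ℝ → E →L[ℝ] E} {M : ℝ} {𝔄 : Set (ℝ → E)}

def IntegrablyBounded (𝔄 : Set (ℝ → E)) (s : Set ℝ) : Prop :=
  ∃ g : ℝ → ℝ, IntegrableOn g s ∧ ∀ y ∈ 𝔄, ∀ᵐ t ∂volume.restrict s, ‖y t‖ ≤ g t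

theorem IntegrablyBounded.exists_pos_forall_norm_integral_apply_sub_lt
    (h𝔄 : IntegrablyBounded 𝔄 (Icc 0 1)) (hM : ∀ t, ‖T t‖ ≤ M) {ε : ℝ} (hε : 0 < ε) :
    ∃ δ > 0, ∀ y ∈ 𝔄, ∀ a b, 0 ≤ a → a ≤ b → b ≤ 1 → b - a ≤ δ → ∀ t,
      ‖∫ s in a..b, T (t - s) (y s)‖ < ε := by
  obtain ⟨g, hg, hyg⟩ := h𝔄
  have hM0 : 0 ≤ M := (norm_nonneg _).trans (hM 0)
  obtain ⟨δ, hδ, hgδ⟩ := ((intervalIntegrable_iff_integrableOn_Icc_of_le zero_le_one).2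
    hg).exists_pos_forall_norm_integral_lt (ε := ε / (M + 1)) (by positivity)
  refine ⟨δ, hδ, fun y hy a b ha hab hb hba t => ?_⟩
  have hsub : Ioc a b ⊆ Icc 0 1 := Ioc_subset_Icc_self.trans (Icc_subset_Icc ha hb)
  have hga : ‖∫ s in a..b, g s‖ < ε / (M + 1) :=
    hgδ a (by rw [uIcc_of_le zero_le_one]; exact ⟨ha, hab.trans hb⟩)
      b (by rw [uIcc_of_le zero_le_one]; exact ⟨ha.trans hab, hb⟩)
      (by rw [Real.dist_eq, abs_sub_comm, abs_of_nonneg (sub_nonneg.2 hab)]; exact hba)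
  calc ‖∫ s in a..b, T (t - s) (y s)‖
      ≤ M * ∫ s in a..b, g s :=
        norm_integral_apply_sub_le hM hab (hg.mono_set hsub)
          (ae_restrict_of_ae_restrict_of_subset hsub (hyg y hy)) t
    _ ≤ M * (ε / (M + 1)) := mul_le_mul_of_nonneg_left ((le_abs_self _).trans hga.le) hM0
    _ < ε := by rw [mul_div_assoc', div_lt_iff₀ (by positivity)]; nlinarith

theorem IntegrablyBounded.exists_forall_norm_duhamel_le (h𝔄 : IntegrablyBounded 𝔄 (Icc 0 1))
    (hM : ∀ t, ‖T t‖ ≤ M) : ∃ R, ∀ y ∈ 𝔄, ∀ t ∈ Icc (0:ℝ) 1, ‖duhamel T y t‖ ≤ R := by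
  obtain ⟨g, hg, hyg⟩ := h𝔄
  have hprim := intervalIntegral.continuousOn_primitive_interval (a := 0) (b := 1)
    (by rwa [uIcc_of_le zero_le_one])
  rw [uIcc_of_le zero_le_one] at hprim
  obtain ⟨C, hC⟩ := isCompact_Icc.exists_bound_of_continuousOn hprim
  refine ⟨M * C, fun y hy t ht => ?_⟩
  have hsub : Ioc 0 t ⊆ Icc 0 1 := Ioc_subset_Icc_self.trans (Icc_subset_Icc le_rfl ht.2)
  calc ‖duhamel T y t‖ ≤ M * ∫ s in (0:ℝ)..t, g s :=
        norm_integral_apply_sub_le hM ht.1 (hg.mono_set hsub)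
          (ae_restrict_of_ae_restrict_of_subset hsub (hyg y hy)) t
    _ ≤ M * C := mul_le_mul_of_nonneg_left ((le_abs_self _).trans (hC t ht))
          ((norm_nonneg _).trans (hM 0))

end IntegrablyBoundedFamily

section CompactSemigroup

variable {E : Type*} [NormedAddCommGroup E] [NormedSpace ℝ E] [CompleteSpace E]
  {T : ℝ → E →L[ℝ] E} {M : ℝ} {𝔄 : Set (ℝ → E)}

theorem totallyBounded_duhamel (hT : ∀ x, Continuous fun t => T t x) (hM : ∀ t, ‖T t‖ ≤ M)
    (hTadd : ∀ a b, 0 ≤ a → 0 ≤ b → a + b ≤ 1 → T (a + b) = (T a).comp (T b))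
    (hTcomp : ∀ t, 0 < t → IsCompactOperator (T t))
    (hint : ∀ y ∈ 𝔄, IntegrableOn y (Icc 0 1)) (h𝔄 : IntegrablyBounded 𝔄 (Icc 0 1)) :
    TotallyBounded {x | ∃ y ∈ 𝔄, ∃ t ∈ Icc (0:ℝ) 1, duhamel T y t = x} := by
  obtain ⟨R, hR⟩ := h𝔄.exists_forall_norm_duhamel_le hM
  refine Metric.totallyBounded_of_forall_subset_thickening fun ε hε => ?_
  obtain ⟨δ, hδ, htail⟩ := h𝔄.exists_pos_forall_norm_integral_apply_sub_lt hM hε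
  refine ⟨T δ '' Metric.closedBall 0 R ∪ {0}, ?_, ?_⟩
  · exact (((hTcomp δ hδ).isCompact_closure_image_closedBall R).totallyBounded.subset
      subset_closure).union (finite_singleton 0).totallyBounded
  rintro _ ⟨y, hy, t, ht, rfl⟩
  rw [Metric.mem_thickening_iff]
  rcases le_or_gt t δ with htδ | hδt
  · exact ⟨0, Or.inr rfl, by
      simpa [duhamel] using htail y hy 0 t le_rfl ht.1 ht.2 (by linarith) t⟩
  · refine ⟨T δ (duhamel T y (t - δ)), Or.inl (mem_image_of_mem _ ?_), ?_⟩
    · exact mem_closedBall_zero_iff.2 (hR y hy _ ⟨by linarith, by linarith [ht.2]⟩)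
    · have hsplit := duhamel_eq_apply_add hT hM hTadd (hint y hy) (t := t - δ) (t' := t)
        (by linarith) (by linarith) ht.2
      rw [sub_sub_cancel] at hsplit
      rw [dist_eq_norm, hsplit, add_sub_cancel_left]
      exact htail y hy (t - δ) t (by linarith) (by linarith) ht.2 (by linarith) t

theorem exists_pos_forall_dist_duhamel_lt (hT : ∀ x, Continuous fun t => T t x)
    (hM : ∀ t, ‖T t‖ ≤ M) (hT0 : T 0 = ContinuousLinearMap.id ℝ E)
    (hTadd : ∀ a b, 0 ≤ a → 0 ≤ b → a + b ≤ 1 → T (a + b) = (T a).comp (T b))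
    (hTcomp : ∀ t, 0 < t → IsCompactOperator (T t))
    (hint : ∀ y ∈ 𝔄, IntegrableOn y (Icc 0 1)) (h𝔄 : IntegrablyBounded 𝔄 (Icc 0 1))
    {ε : ℝ} (hε : 0 < ε) : ∃ δ > 0, ∀ y ∈ 𝔄, ∀ t ∈ Icc (0:ℝ) 1, ∀ t' ∈ Icc (0:ℝ) 1,
      dist t t' < δ → dist (duhamel T y t) (duhamel T y t') < ε := by
  set V := {x | ∃ y ∈ 𝔄, ∃ t ∈ Icc (0:ℝ) 1, duhamel T y t = x}
  have hV : IsCompact (closure V) :=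
    (totallyBounded_duhamel hT hM hTadd hTcomp hint h𝔄).closure.isCompact_of_isClosed
      isClosed_closure
  -- `T h → T 0` uniformly on the compact set `closure V`, by joint continuity
  obtain ⟨U, hU, hTU⟩ := hV.mem_uniformity_of_prod (f := fun h x => T h x)
    (continuous_uncurry_of_continuous_apply hT hM).continuousOn (mem_univ 0)
    (Metric.dist_mem_uniformity (half_pos hε))
  rw [nhdsWithin_univ] at hU
  obtain ⟨δ₁, hδ₁, hδ₁U⟩ := Metric.mem_nhds_iff.1 hU
  obtain ⟨δ₂, hδ₂, htail⟩ := h𝔄.exists_pos_forall_norm_integral_apply_sub_lt hM (half_pos hε)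
  have hle : ∀ y ∈ 𝔄, ∀ t t', 0 ≤ t → t ≤ t' → t' ≤ 1 → t' - t < min δ₁ δ₂ →
      ‖duhamel T y t' - duhamel T y t‖ < ε := by
    intro y hy t t' ht htt' ht' hδ
    have hshift : ‖T (t' - t) (duhamel T y t) - duhamel T y t‖ < ε / 2 := by
      have := hTU (t' - t) (hδ₁U (by
        rw [Metric.mem_ball, Real.dist_eq, sub_zero, abs_of_nonneg (sub_nonneg.2 htt')]
        exact hδ.trans_le (min_le_left _ _))) _
        (subset_closure ⟨y, hy, t, ⟨ht, htt'.trans ht'⟩, rfl⟩)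
      simpa [hT0, dist_eq_norm] using this
    rw [duhamel_eq_apply_add hT hM hTadd (hint y hy) ht htt' ht', add_sub_right_comm]
    calc _ ≤ ‖T (t' - t) (duhamel T y t) - duhamel T y t‖ + ‖∫ s in t..t', T (t' - s) (y s)‖ :=
          norm_add_le _ _
      _ < ε / 2 + ε / 2 := add_lt_add hshift
          (htail y hy t t' ht htt' ht' (hδ.le.trans (min_le_right _ _)) t')
      _ = ε := add_halves ε
  refine ⟨min δ₁ δ₂, lt_min hδ₁ hδ₂, fun y hy t ht t' ht' htt' => ?_⟩
  rw [Real.dist_eq] at htt'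
  rcases le_total t t' with h | h
  · rw [dist_comm, dist_eq_norm]
    exact hle y hy t t' ht.1 h ht'.2
      (by rwa [abs_sub_comm, abs_of_nonneg (sub_nonneg.2 h)] at htt')
  · rw [dist_eq_norm]
    exact hle y hy t' t ht'.1 h ht.2 (by rwa [abs_of_nonneg (sub_nonneg.2 h)] at htt')

theorem continuousOn_duhamel (hT : ∀ x, Continuous fun t => T t x)
    (hM : ∀ t, ‖T t‖ ≤ M) (hT0 : T 0 = ContinuousLinearMap.id ℝ E)
    (hTadd : ∀ a b, 0 ≤ a → 0 ≤ b → a + b ≤ 1 → T (a + b) = (T a).comp (T b))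
    (hTcomp : ∀ t, 0 < t → IsCompactOperator (T t)) {y : ℝ → E}
    (hy : IntegrableOn y (Icc 0 1)) : ContinuousOn (duhamel T y) (Icc 0 1) := by
  have hbd : IntegrablyBounded {y} (Icc 0 1) := ⟨fun t => ‖y t‖, hy.norm, by
    simp only [mem_singleton_iff, forall_eq]
    exact ae_of_all _ fun _ => le_rfl⟩
  refine (Metric.uniformContinuousOn_iff.2 fun ε hε => ?_).continuousOn
  obtain ⟨δ, hδ, h⟩ := exists_pos_forall_dist_duhamel_lt hT hM hT0 hTadd hTcomp
    (by simpa using hy) hbd hε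
  exact ⟨δ, hδ, h y rfl⟩

theorem isCompact_closure_duhamel (hT : ∀ x, Continuous fun t => T t x)
    (hM : ∀ t, ‖T t‖ ≤ M) (hT0 : T 0 = ContinuousLinearMap.id ℝ E)
    (hTadd : ∀ a b, 0 ≤ a → 0 ≤ b → a + b ≤ 1 → T (a + b) = (T a).comp (T b))
    (hTcomp : ∀ t, 0 < t → IsCompactOperator (T t))
    (hint : ∀ y ∈ 𝔄, IntegrableOn y (Icc 0 1)) (h𝔄 : IntegrablyBounded 𝔄 (Icc 0 1)) :
    IsCompact (closure {f : C(Icc (0:ℝ) 1, E) | ∃ y ∈ 𝔄, ∀ t, f t = duhamel T y t}) := by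
  refine ContinuousMap.isCompact_closure_of_equicontinuous
    ((totallyBounded_duhamel hT hM hTadd hTcomp hint h𝔄).closure.isCompact_of_isClosed
      isClosed_closure) ?_ ?_
  · rintro f ⟨y, hy, hf⟩ t
    exact subset_closure ⟨y, hy, t, t.2, (hf t).symm⟩
  refine (Metric.uniformEquicontinuous_iff.2 fun ε hε => ?_).equicontinuous
  obtain ⟨δ, hδ, h⟩ := exists_pos_forall_dist_duhamel_lt hT hM hT0 hTadd hTcomp hint h𝔄 hε
  refine ⟨δ, hδ, fun t t' htt' ⟨f, y, hy, hf⟩ => ?_⟩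
  simpa only [hf] using h y hy t t.2 t' t'.2 htt'

end CompactSemigroup

/-- Let `(S(t))_{t≥0}` be a compact `C₀`-semigroup on a real Banach space `E`
and, for a Bochner integrable `y : [0,1] → E`, let `K₀(y)(t) = ∫₀ᵗ S(t-s) y(s) ds`.  Then each
`K₀ y` is continuous on `[0,1]`, and `K₀` maps every integrably bounded family `𝔄` of Bochner
integrable functions onto a relatively compact subset of `C([0,1], E)` (sup metric). -/
theorem cauchy_operator_maps_integrably_bounded_to_relatively_compact
    {E : Type*} [NormedAddCommGroup E] [NormedSpace ℝ E] [CompleteSpace E]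
    (S : ℝ → E →L[ℝ] E)
    (hS0 : S 0 = ContinuousLinearMap.id ℝ E)
    (hSadd : ∀ s t : ℝ, 0 ≤ s → 0 ≤ t → S (t + s) = (S t).comp (S s))
    (hScont : ∀ x : E, ContinuousOn (fun t => S t x) (Set.Ici (0:ℝ)))
    (hScompact : ∀ t : ℝ, 0 < t → IsCompactOperator (S t))
    (K₀ : (ℝ → E) → ℝ → E)
    (hK₀ : ∀ y : ℝ → E, ∀ t : ℝ, K₀ y t = ∫ s in (0:ℝ)..t, S (t - s) (y s)) :
    (∀ y : ℝ → E, IntegrableOn y (Set.Icc 0 1) → ContinuousOn (K₀ y) (Set.Icc 0 1)) ∧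
    (∀ 𝔄 : Set (ℝ → E), (∀ y ∈ 𝔄, IntegrableOn y (Set.Icc 0 1)) →
      (∃ lam : ℝ → ℝ, IntegrableOn lam (Set.Icc 0 1) ∧
        ∀ y ∈ 𝔄, ∀ᵐ t ∂(volume.restrict (Set.Icc 0 1)), ‖y t‖ ≤ lam t) →
      IsCompact (closure {g : C(Set.Icc (0:ℝ) 1, E) |
        ∃ y ∈ 𝔄, ∀ t : Set.Icc (0:ℝ) 1, g t = K₀ y t})) := by
  obtain ⟨M, hM⟩ :=
    (isCompact_Icc (a := (0:ℝ)) (b := 1)).exists_forall_norm_le_of_continuousOn_apply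
      fun x => (hScont x).mono Icc_subset_Ici_self
  set T : ℝ → E →L[ℝ] E := IccExtend zero_le_one fun t : Icc (0:ℝ) 1 => S t
  have hTS : ∀ t ∈ Icc (0:ℝ) 1, T t = S t := fun t ht => IccExtend_of_mem _ _ ht
  have hT : ∀ x, Continuous fun t => T t x := fun x =>
    (hScont x).comp_continuous (continuous_subtype_val.comp continuous_projIcc)
      fun t => (projIcc 0 1 zero_le_one t).2.1
  have hTM : ∀ t, ‖T t‖ ≤ M := fun t => hM _ (projIcc 0 1 zero_le_one t).2
  have hT0 : T 0 = ContinuousLinearMap.id ℝ E := (hTS 0 ⟨le_rfl, zero_le_one⟩).trans hS0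
  have hTadd : ∀ a b, 0 ≤ a → 0 ≤ b → a + b ≤ 1 → T (a + b) = (T a).comp (T b) :=
    fun a b ha hb hab => by
      rw [hTS _ ⟨add_nonneg ha hb, hab⟩, hTS a ⟨ha, by linarith⟩, hTS b ⟨hb, by linarith⟩,
        hSadd b a hb ha]
  have hTcomp : ∀ t, 0 < t → IsCompactOperator (T t) := fun t ht =>
    hScompact _ (by simp [projIcc, ht])
  have hK : ∀ y, ∀ t ∈ Icc (0:ℝ) 1, K₀ y t = duhamel T y t := fun y t ht => by
    rw [hK₀, duhamel_IccExtend S y ht]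
  refine ⟨fun y hy => (continuousOn_duhamel hT hTM hT0 hTadd hTcomp hy).congr (hK y),
    fun 𝔄 hint h𝔄 => ?_⟩
  convert isCompact_closure_duhamel hT hTM hT0 hTadd hTcomp hint h𝔄 using 7 with f y
  exact forall_congr' fun t => by rw [hK y t t.2]
end

section
/- Let E be a real Banach space, 𝓚 ⊆ E nonempty closed convex, and U ⊆ 𝓚 bounded and relatively open in 𝓚, with ∂U its boundary in 𝓚. Let A be a linear operator with domain D(A) ⊆ E, h > 0, and J : E → E a compact continuous linear operator such that Jx ∈ D(A) and Jx − h•A(Jx) = x for all x ∈ E, and J(y − h•Ay) = y for all y ∈ D(A). Let G : 𝓚 → (nonempty subsets of E) be Hausdorff upper semicontinuous with convex weakly compact values, mapping bounded sets onto bounded sets. If Ax + y ≠ 0 for every x ∈ D(A) ∩ ∂U and every y ∈ G(x), then there exists α₀ > 0 such that for every x ∈ D(A) ∩ ∂U, every x' ∈ 𝓚 with ‖x' − x‖ < α₀, every y ∈ G(x') and every ξ ∈ E with ‖ξ‖ < α₀, one has Ax + y + ξ ≠ 0. -/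
/-!
Suppose there are approximate zeros: `xₙ ∈ D(A) ∩ ∂U`, `x'ₙ ∈ 𝓚`, `yₙ ∈ G x'ₙ` and `ξₙ` with
`‖x'ₙ - xₙ‖, ‖ξₙ‖ → 0` and `A xₙ + yₙ + ξₙ = 0`. Then `xₙ = J (xₙ + h (yₙ + ξₙ))` with bounded
arguments, so by compactness of `J` a subsequence converges to some `x₀ ∈ ∂U`. Hausdorff upper
semicontinuity gives `zₙ ∈ G x₀` with `yₙ - zₙ → 0`, hence `J zₙ → h⁻¹ (x₀ - J x₀)`. Since
`J (G x₀)` is weakly compact, hence closed, this limit is `J y₀` for some `y₀ ∈ G x₀`, so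
`x₀ = J (x₀ + h y₀)`, i.e. `x₀ ∈ D(A)` and `A x₀ + y₀ = 0`: a zero on the boundary.
-/

open Metric Set Filter Topology Bornology

section WeakTopology

variable {𝕜 E F : Type*} [RCLike 𝕜] [NormedAddCommGroup E] [NormedSpace 𝕜 E]
  [NormedAddCommGroup F] [NormedSpace 𝕜 F]

theorem isClosed_of_isCompact_toWeakSpace_image {S : Set E}
    (hS : IsCompact (toWeakSpace 𝕜 E '' S)) : IsClosed S := by
  rw [← preimage_image_eq S (toWeakSpace 𝕜 E).injective]
  exact hS.isClosed.preimage (toWeakSpaceCLM 𝕜 E).continuous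

theorem isClosed_image_of_isCompact_toWeakSpace_image (J : E →L[𝕜] F) {S : Set E}
    (hS : IsCompact (toWeakSpace 𝕜 E '' S)) : IsClosed (J '' S) := by
  refine isClosed_of_isCompact_toWeakSpace_image (𝕜 := 𝕜) ?_
  have hJS := hS.image (WeakSpace.map J).continuous
  rw [image_image] at hJS ⊢
  exact hJS

end WeakTopology

theorem isClosed_closure_inter_diff_inter {X : Type*} [TopologicalSpace X] {K V : Set X}
    (hK : IsClosed K) (hV : IsOpen V) : IsClosed ((closure (V ∩ K) ∩ K) \ (V ∩ K)) := by
  have : (closure (V ∩ K) ∩ K) \ (V ∩ K) = closure (V ∩ K) ∩ K ∩ Vᶜ := by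
    ext; simp only [Set.mem_sdiff, mem_inter_iff, mem_compl_iff]; tauto
  exact this ▸ (isClosed_closure.inter hK).inter hV.isClosed_compl

theorem isBounded_range_add {ι E : Type*} [SeminormedAddCommGroup E] {f g : ι → E}
    (hf : IsBounded (range f)) (hg : IsBounded (range g)) : IsBounded (range (f + g)) :=
  (isBounded_add hf hg).subset <|
    range_subset_iff.2 fun i ↦ add_mem_add (mem_range_self i) (mem_range_self i)

theorem IsCompactOperator.exists_subseq_tendsto {𝕜 E F : Type*} [NontriviallyNormedField 𝕜]
    [NormedAddCommGroup E] [NormedSpace 𝕜 E] [NormedAddCommGroup F] [NormedSpace 𝕜 F]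
    {J : E →L[𝕜] F} (hJ : IsCompactOperator J) {w : ℕ → E} (hw : IsBounded (range w)) :
    ∃ a, ∃ φ : ℕ → ℕ, StrictMono φ ∧ Tendsto (J ∘ w ∘ φ) atTop (𝓝 a) := by
  obtain ⟨K, hK, hJK⟩ := hJ.image_subset_compact_of_bounded (f := (J : E →ₗ[𝕜] F)) hw
  obtain ⟨a, -, φ, hφ, hlim⟩ := hK.tendsto_subseq fun n ↦ hJK ⟨w n, mem_range_self n, rfl⟩
  exact ⟨a, φ, hφ, hlim⟩

section Resolvent

variable {E : Type*} [NormedAddCommGroup E] [NormedSpace ℝ E] {A : E →ₗ.[ℝ] E} {J : E → E}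
  {h : ℝ}

theorem resolvent_apply_add_smul_eq (hJ : ∀ y : A.domain, J ((y : E) - h • A y) = y)
    {x : A.domain} {w : E} (hw : A x + w = 0) : J (x + h • w) = x := by
  rw [eq_neg_of_add_eq_zero_right hw, smul_neg, ← sub_eq_add_neg]
  exact hJ x

theorem exists_mem_domain_add_eq_zero_of_resolvent_eq
    (hJ : ∀ x : E, ∃ hx : J x ∈ A.domain, J x - h • A ⟨J x, hx⟩ = x) (hh : h ≠ 0) {x y : E}
    (hxy : J (x + h • y) = x) : ∃ hx : x ∈ A.domain, A ⟨x, hx⟩ + y = 0 := by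
  obtain ⟨hx, heq⟩ := hJ (x + h • y)
  generalize J (x + h • y) = u at hx heq hxy
  subst hxy
  refine ⟨hx, (smul_eq_zero.1 ?_).resolve_left hh⟩
  rw [smul_add]
  linear_combination (norm := module) -heq

end Resolvent

section HausdorffUSC

variable {ι E F : Type*} [SeminormedAddCommGroup E] [PseudoMetricSpace F]

def IsHausdorffUSCOn (G : E → Set F) (K : Set E) : Prop :=
  ∀ x₀ ∈ K, ∀ ε > (0:ℝ), ∃ δ > (0:ℝ), ∀ x ∈ K, ‖x - x₀‖ < δ →
    G x ⊆ {y : F | infDist y (G x₀) < ε}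

theorem IsHausdorffUSCOn.tendsto_infDist {G : E → Set F} {K : Set E} (hG : IsHausdorffUSCOn G K)
    {x₀ : E} (hx₀ : x₀ ∈ K) {l : Filter ι} {x : ι → E} {y : ι → F} (hxK : ∀ᶠ i in l, x i ∈ K)
    (hx : Tendsto x l (𝓝 x₀)) (hy : ∀ᶠ i in l, y i ∈ G (x i)) :
    Tendsto (fun i ↦ infDist (y i) (G x₀)) l (𝓝 0) := by
  refine Metric.tendsto_nhds.2 fun ε hε ↦ ?_
  obtain ⟨δ, hδ, hGδ⟩ := hG x₀ hx₀ ε hε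
  have hxδ := (tendsto_iff_norm_sub_tendsto_zero.1 hx).eventually (gt_mem_nhds hδ)
  filter_upwards [hxK, hy, hxδ] with i hxi hyi hxi'
  rw [Real.dist_0_eq_abs, abs_of_nonneg infDist_nonneg]
  exact hGδ (x i) hxi hxi' hyi

end HausdorffUSC

theorem exists_tendsto_dist_of_tendsto_infDist {F : Type*} [PseudoMetricSpace F] {S : Set F}
    (hS : S.Nonempty) {y : ℕ → F} (hy : Tendsto (fun n ↦ infDist (y n) S) atTop (𝓝 0)) :
    ∃ z : ℕ → F, (∀ n, z n ∈ S) ∧ Tendsto (fun n ↦ dist (y n) (z n)) atTop (𝓝 0) := by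
  choose z hzS hz using fun n : ℕ ↦
    (infDist_lt_iff hS).1 (lt_add_of_pos_right (infDist (y n) S) (Nat.one_div_pos_of_nat (n := n)))
  refine ⟨z, hzS, squeeze_zero (fun n ↦ dist_nonneg) (fun n ↦ (hz n).le) ?_⟩
  simpa using hy.add tendsto_one_div_add_atTop_nhds_zero_nat

section Approximation

variable {E : Type*} [NormedAddCommGroup E] [NormedSpace ℝ E] {J : E →L[ℝ] E} {h : ℝ}

theorem exists_apply_add_smul_eq_of_tendsto {ι : Type*} {l : Filter ι} [l.NeBot] {S : Set E}
    (hJS : IsClosed (J '' S)) (hh : h ≠ 0) {x z e : ι → E} {x₀ : E} (hx : Tendsto x l (𝓝 x₀))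
    (hz : ∀ i, z i ∈ S) (he : Tendsto e l (𝓝 0)) (hJ : ∀ i, J (x i + h • (z i + e i)) = x i) :
    ∃ y ∈ S, J (x₀ + h • y) = x₀ := by
  have hJz : ∀ i, J (z i) = h⁻¹ • (x i - J (x i)) - J (e i) := fun i ↦ by
    have := hJ i
    rw [map_add, map_smul, map_add] at this
    rw [← eq_sub_of_add_eq' this, smul_smul, inv_mul_cancel₀ hh, one_smul, add_sub_cancel_right]
  have hlim : Tendsto (fun i ↦ J (z i)) l (𝓝 (h⁻¹ • (x₀ - J x₀))) := by
    simp_rw [hJz]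
    simpa using ((hx.sub ((J.continuous.tendsto x₀).comp hx)).const_smul h⁻¹).sub
      ((J.continuous.tendsto 0).comp he)
  obtain ⟨y, hyS, hJy⟩ :=
    hJS.mem_of_tendsto hlim (Eventually.of_forall fun i ↦ mem_image_of_mem J (hz i))
  refine ⟨y, hyS, ?_⟩
  rw [map_add, map_smul, hJy, smul_smul, mul_inv_cancel₀ hh, one_smul, add_sub_cancel]

variable {G : E → Set E} {K : Set E} {x x' y ξ : ℕ → E}

theorem isBounded_range_add_smul_add (hx : IsBounded (range x))
    (hxx' : Tendsto (x' - x) atTop (𝓝 0)) (hx'K : ∀ n, x' n ∈ K) (hy : ∀ n, y n ∈ G (x' n))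
    (hG : ∀ S ⊆ K, IsBounded S → IsBounded (⋃ x ∈ S, G x)) (hξ : Tendsto ξ atTop (𝓝 0))
    (h : ℝ) : IsBounded (range fun n ↦ x n + h • (y n + ξ n)) := by
  have hx' : IsBounded (range x') := by
    simpa using isBounded_range_add hx (isBounded_range_of_tendsto _ hxx')
  have hy' : IsBounded (range y) := (hG _ (range_subset_iff.2 hx'K) hx').subset <|
    range_subset_iff.2 fun n ↦ mem_biUnion (mem_range_self n) (hy n)
  refine isBounded_range_add hx ?_
  have hyξ := (isBounded_range_add hy' (isBounded_range_of_tendsto _ hξ)).smul₀ h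
  rw [smul_set_range] at hyξ
  simpa only [Pi.add_apply, smul_add] using hyξ

theorem exists_apply_add_smul_eq_of_approx {B : Set E} (hJ : IsCompactOperator J) (hh : h ≠ 0)
    (hB : IsClosed B) (hBK : B ⊆ K) (hG : IsHausdorffUSCOn G K) (hGne : ∀ x ∈ K, (G x).Nonempty)
    (hJG : ∀ x ∈ K, IsClosed (J '' G x)) (hxB : ∀ n, x n ∈ B) (hx'K : ∀ n, x' n ∈ K)
    (hxx' : Tendsto (x' - x) atTop (𝓝 0)) (hy : ∀ n, y n ∈ G (x' n))
    (hξ : Tendsto ξ atTop (𝓝 0)) (hw : IsBounded (range fun n ↦ x n + h • (y n + ξ n)))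
    (hJx : ∀ n, J (x n + h • (y n + ξ n)) = x n) :
    ∃ x₀ ∈ B, ∃ y₀ ∈ G x₀, J (x₀ + h • y₀) = x₀ := by
  obtain ⟨x₀, φ, hφ, hxφ⟩ := hJ.exists_subseq_tendsto hw
  simp only [Function.comp_def, hJx] at hxφ
  have hx₀B : x₀ ∈ B := hB.mem_of_tendsto hxφ (Eventually.of_forall fun k ↦ hxB (φ k))
  have hx'φ : Tendsto (fun k ↦ x' (φ k)) atTop (𝓝 x₀) := by
    simpa using hxφ.add (hxx'.comp hφ.tendsto_atTop)
  obtain ⟨z, hzG, hyz⟩ := exists_tendsto_dist_of_tendsto_infDist (hGne x₀ (hBK hx₀B)) <|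
    hG.tendsto_infDist (hBK hx₀B) (Eventually.of_forall fun k ↦ hx'K (φ k)) hx'φ
      (Eventually.of_forall fun k ↦ hy (φ k))
  refine ⟨x₀, hx₀B, exists_apply_add_smul_eq_of_tendsto (hJG x₀ (hBK hx₀B)) hh hxφ hzG
    (e := fun k ↦ ξ (φ k) + (y (φ k) - z k)) ?_ fun k ↦ ?_⟩
  · simpa using (hξ.comp hφ.tendsto_atTop).add
      (tendsto_iff_norm_sub_tendsto_zero.2 (by simpa [dist_eq_norm] using hyz))
  · convert hJx (φ k) using 4
    abel

end Approximation

theorem no_zeros_near_boundary_general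
    {E : Type*} [NormedAddCommGroup E] [NormedSpace ℝ E]
    (𝓚 : Set E) (hcl : IsClosed 𝓚)
    (U : Set E) (hUbdd : Bornology.IsBounded U)
    (hUopen : ∃ V : Set E, IsOpen V ∧ U = V ∩ 𝓚)
    -- the resolvent J = (I - h A)⁻¹, a compact operator
    (A : E →ₗ.[ℝ] E) (h : ℝ) (hh : 0 < h)
    (J : E →L[ℝ] E) (hJcomp : IsCompactOperator J)
    (hJ1 : ∀ x : E, ∃ hx : J x ∈ A.domain, J x - h • A ⟨J x, hx⟩ = x)
    (hJ2 : ∀ y : A.domain, J ((y : E) - h • A y) = (y : E))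
    -- the multivalued map G
    (G : E → Set E)
    (hGne : ∀ x ∈ 𝓚, (G x).Nonempty)
    (hGusc : ∀ x₀ ∈ 𝓚, ∀ ε > (0:ℝ), ∃ δ > (0:ℝ), ∀ x ∈ 𝓚, ‖x - x₀‖ < δ →
      G x ⊆ {y : E | Metric.infDist y (G x₀) < ε})
    (hGweakcpt : ∀ x ∈ 𝓚, IsCompact ((toWeakSpace ℝ E) '' (G x)))
    (hGbdd : ∀ B : Set E, B ⊆ 𝓚 → Bornology.IsBounded B →
      Bornology.IsBounded (⋃ x ∈ B, G x))
    -- no zeros of A + G on the relative boundary of U in 𝓚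
    (hne0 : ∀ x, ∀ hx : x ∈ A.domain, x ∈ (closure U ∩ 𝓚) \ U →
      ∀ y ∈ G x, A ⟨x, hx⟩ + y ≠ 0) :
    ∃ α₀ > (0:ℝ), ∀ x, ∀ hx : x ∈ A.domain, x ∈ (closure U ∩ 𝓚) \ U →
      ∀ x' ∈ 𝓚, ‖x' - x‖ < α₀ → ∀ y ∈ G x', ∀ ξ : E, ‖ξ‖ < α₀ →
        A ⟨x, hx⟩ + y + ξ ≠ 0 := by
  obtain ⟨V, hV, rfl⟩ := hUopen
  by_contra! hcon
  choose x hxA hxB x' hx'K hxx' y hy ξ hξ hzero using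
    fun n : ℕ ↦ hcon _ (Nat.one_div_pos_of_nat (n := n))
  have hsmall {u : ℕ → E} (hu : ∀ n, ‖u n‖ < 1 / (n + 1)) : Tendsto u atTop (𝓝 0) :=
    squeeze_zero_norm (fun n ↦ (hu n).le) tendsto_one_div_add_atTop_nhds_zero_nat
  have hxx'0 : Tendsto (x' - x) atTop (𝓝 0) := hsmall hxx'
  have hξ0 : Tendsto ξ atTop (𝓝 0) := hsmall hξ
  have hJx (n : ℕ) : J (x n + h • (y n + ξ n)) = x n :=
    resolvent_apply_add_smul_eq (x := ⟨x n, hxA n⟩) hJ2 (by rw [← add_assoc]; exact hzero n)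
  have hxb : IsBounded (range x) :=
    hUbdd.closure.subset (range_subset_iff.2 fun n ↦ (hxB n).1.1)
  obtain ⟨x₀, hx₀B, y₀, hy₀, hJx₀⟩ := exists_apply_add_smul_eq_of_approx hJcomp hh.ne'
    (isClosed_closure_inter_diff_inter hcl hV) (fun _ hx ↦ hx.1.2) hGusc hGne
    (fun x hx ↦ isClosed_image_of_isCompact_toWeakSpace_image J (hGweakcpt x hx)) hxB hx'K
    hxx'0 hy hξ0 (isBounded_range_add_smul_add hxb hxx'0 hx'K hy hGbdd hξ0 h) hJx
  obtain ⟨hx₀A, hzero₀⟩ := exists_mem_domain_add_eq_zero_of_resolvent_eq hJ1 hh.ne' hJx₀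
  exact hne0 x₀ hx₀A hx₀B y₀ hy₀ hzero₀

/-- Let `𝓚 ⊆ E` be nonempty closed convex, `U ⊆ 𝓚` bounded and relatively
open in `𝓚` with relative boundary `∂U = (cl U ∩ 𝓚) \ U`.  Let `A` be a partially defined
linear operator with compact resolvent `J = (I - hA)⁻¹`, and let `G` be an H-usc map with
convex weakly compact values mapping bounded sets to bounded sets.  If `Ax + y ≠ 0` for all
`x ∈ D(A) ∩ ∂U`, `y ∈ G(x)`, then there is `α₀ > 0` such that `Ax + y + ξ ≠ 0` whenever
`x ∈ D(A) ∩ ∂U`, `x' ∈ 𝓚`, `‖x' - x‖ < α₀`, `y ∈ G(x')` and `‖ξ‖ < α₀`. -/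
theorem no_zeros_near_boundary
    {E : Type*} [NormedAddCommGroup E] [NormedSpace ℝ E] [CompleteSpace E]
    [MeasurableSpace E] [BorelSpace E]
    (𝓚 : Set E) (hne : 𝓚.Nonempty) (hcl : IsClosed 𝓚) (hconv : Convex ℝ 𝓚)
    (U : Set E) (hU𝓚 : U ⊆ 𝓚) (hUbdd : Bornology.IsBounded U)
    (hUopen : ∃ V : Set E, IsOpen V ∧ U = V ∩ 𝓚)
    -- the resolvent J = (I - h A)⁻¹, a compact operator
    (A : E →ₗ.[ℝ] E) (h : ℝ) (hh : 0 < h)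
    (J : E →L[ℝ] E) (hJcomp : IsCompactOperator J)
    (hJ1 : ∀ x : E, ∃ hx : J x ∈ A.domain, J x - h • A ⟨J x, hx⟩ = x)
    (hJ2 : ∀ y : A.domain, J ((y : E) - h • A y) = (y : E))
    -- the multivalued map G
    (G : E → Set E)
    (hGne : ∀ x ∈ 𝓚, (G x).Nonempty)
    (hGusc : ∀ x₀ ∈ 𝓚, ∀ ε > (0:ℝ), ∃ δ > (0:ℝ), ∀ x ∈ 𝓚, ‖x - x₀‖ < δ →
      G x ⊆ {y : E | Metric.infDist y (G x₀) < ε})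
    (hGconv : ∀ x ∈ 𝓚, Convex ℝ (G x))
    (hGweakcpt : ∀ x ∈ 𝓚, IsCompact ((toWeakSpace ℝ E) '' (G x)))
    (hGbdd : ∀ B : Set E, B ⊆ 𝓚 → Bornology.IsBounded B →
      Bornology.IsBounded (⋃ x ∈ B, G x))
    -- no zeros of A + G on the relative boundary of U in 𝓚
    (hne0 : ∀ x, ∀ hx : x ∈ A.domain, x ∈ (closure U ∩ 𝓚) \ U →
      ∀ y ∈ G x, A ⟨x, hx⟩ + y ≠ 0) :
    ∃ α₀ > (0:ℝ), ∀ x, ∀ hx : x ∈ A.domain, x ∈ (closure U ∩ 𝓚) \ U →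
      ∀ x' ∈ 𝓚, ‖x' - x‖ < α₀ → ∀ y ∈ G x', ∀ ξ : E, ‖ξ‖ < α₀ →
        A ⟨x, hx⟩ + y + ξ ≠ 0 :=
  no_zeros_near_boundary_general 𝓚 hcl U hUbdd hUopen A h hh J hJcomp hJ1 hJ2 G hGne hGusc hGweakcpt
    hGbdd hne0
end

section
/- Let E be a real Banach space, 𝓚 ⊆ E nonempty closed convex, M ≥ 1, ω ∈ ℝ, h* > 0, and let (J_h)_{0<h≤h*, hω<1} be a family of continuous linear operators on E satisfying J_h(𝓚) ⊆ 𝓚 and ‖J_h‖ ≤ M/(1 − hω) for all admissible h. Let g : 𝓚 → E be continuous and tangent to 𝓚, i.e., g(x) ∈ T_𝓚(x) for every x ∈ 𝓚. Then for every x ∈ 𝓚 and every ε > 0 there is δ > 0 such that d(J_h(y + h•g(y)), 𝓚) < ε·h whenever 0 < h < δ, hω < 1, h ≤ h*, y ∈ 𝓚 and ‖y − x‖ < δ; that is, d(J_h(y + h g(y)), 𝓚)/h → 0 as h → 0⁺ and y → x in 𝓚. -/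
/-!
Fix `x ∈ 𝓚` and pick a tangent direction `t⁻¹ • (k - x)`, `k ∈ 𝓚`, close to `g x`. For `y ∈ 𝓚`
near `x` and small `h`, the convex combination `(1 - h/t) • y + (h/t) • k` lies in `𝓚` and, by
continuity of `g`, is within `ε h` of `y + h • g y`. Since `J_h` maps `𝓚` into itself and
`‖J_h‖ ≤ M / (1 - hω)` stays bounded as `h → 0`, applying `J_h` multiplies this distance to `𝓚`
by a bounded factor at most.
-/

open Filter Metric Set Topology

theorem LipschitzWith.infDist_le_mul_of_mapsTo {α : Type*} [PseudoMetricSpace α] {f : α → α}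
    {C : NNReal} (hf : LipschitzWith C f) {s : Set α} (hs : MapsTo f s s) (x : α) :
    infDist (f x) s ≤ C * infDist x s := by
  rcases s.eq_empty_or_nonempty with rfl | hne
  · simp
  have : Nonempty s := hne.to_subtype
  calc infDist (f x) s ≤ ⨅ y : s, C * dist x y :=
        le_ciInf fun y => (infDist_le_dist_of_mem (hs y.2)).trans (hf.dist_le_mul x y)
    _ = C * infDist x s := by rw [infDist_eq_iInf, Real.mul_iInf_of_nonneg C.coe_nonneg]

theorem exists_pos_forall_div_one_sub_mul_lt (M ω : ℝ) :
    ∃ δ > 0, ∀ h : ℝ, |h| < δ → M / (1 - h * ω) < |M| + 1 := by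
  have hcont : ContinuousAt (fun h : ℝ => M / (1 - h * ω)) 0 := by fun_prop (disch := simp)
  have hlim : Tendsto (fun h : ℝ => M / (1 - h * ω)) (𝓝 0) (𝓝 M) := by simpa using hcont.tendsto
  obtain ⟨δ, hδ, hbound⟩ := Metric.eventually_nhds_iff.mp
    (hlim.eventually (gt_mem_nhds ((le_abs_self M).trans_lt (lt_add_one _))))
  exact ⟨δ, hδ, fun h hh => hbound (by rwa [Real.dist_0_eq_abs])⟩

section TangentCone

variable {E : Type*} [NormedAddCommGroup E] [NormedSpace ℝ E] {K : Set E} {x : E}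

theorem Convex.infDist_add_smul_lt_of_mem_closure_tangent (hK : Convex ℝ K) {v : E}
    (hv : v ∈ closure (⋃ t ∈ Ioi (0:ℝ), (fun k => t⁻¹ • (k - x)) '' K)) {ε : ℝ} (hε : 0 < ε) :
    ∃ δ > 0, ∀ h : ℝ, 0 < h → h < δ → ∀ y ∈ K, ‖y - x‖ < δ → infDist (y + h • v) K < ε * h := by
  obtain ⟨u, hu, hvu⟩ := Metric.mem_closure_iff.mp hv (ε / 2) (by positivity)
  simp only [mem_iUnion, mem_image, mem_Ioi] at hu
  obtain ⟨t, ht, k, hk, rfl⟩ := hu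
  refine ⟨min t (ε * t / 2), by positivity, fun h hh hδ y hy hyx => ?_⟩
  have hht : h ≤ t := hδ.le.trans (min_le_left _ _)
  have hyx' : ‖y - x‖ < ε * t / 2 := hyx.trans_le (min_le_right _ _)
  have hz : (1 - h / t) • y + (h / t) • k ∈ K :=
    hK hy hk (by rw [sub_nonneg, div_le_one ht]; exact hht) (by positivity) (by ring)
  have hdiff : y + h • v - ((1 - h / t) • y + (h / t) • k)
      = h • ((v - t⁻¹ • (k - x)) + t⁻¹ • (y - x)) := by
    match_scalars <;> field_simp <;> ring
  have hsmall : ‖t⁻¹ • (y - x)‖ < ε / 2 := by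
    rw [norm_smul, Real.norm_of_nonneg (inv_nonneg.mpr ht.le), inv_mul_lt_iff₀ ht]
    linarith
  calc infDist (y + h • v) K ≤ ‖h • ((v - t⁻¹ • (k - x)) + t⁻¹ • (y - x))‖ := by
        rw [← hdiff, ← dist_eq_norm]; exact infDist_le_dist_of_mem hz
    _ ≤ h * (‖v - t⁻¹ • (k - x)‖ + ‖t⁻¹ • (y - x)‖) := by
        rw [norm_smul, Real.norm_of_nonneg hh.le]; gcongr; exact norm_add_le _ _
    _ < h * (ε / 2 + ε / 2) := by
        rw [← dist_eq_norm]; gcongr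
    _ = ε * h := by ring

theorem Convex.infDist_add_smul_apply_lt_of_mem_closure_tangent (hK : Convex ℝ K) {g : E → E}
    (hg : ContinuousWithinAt g K x)
    (hgx : g x ∈ closure (⋃ t ∈ Ioi (0:ℝ), (fun k => t⁻¹ • (k - x)) '' K)) {ε : ℝ} (hε : 0 < ε) :
    ∃ δ > 0, ∀ h : ℝ, 0 < h → h < δ → ∀ y ∈ K, ‖y - x‖ < δ →
      infDist (y + h • g y) K < ε * h := by
  obtain ⟨δ₁, hδ₁, htan⟩ := hK.infDist_add_smul_lt_of_mem_closure_tangent hgx (half_pos hε)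
  obtain ⟨δ₂, hδ₂, hcont⟩ := Metric.continuousWithinAt_iff.mp hg (ε / 2) (half_pos hε)
  refine ⟨min δ₁ δ₂, lt_min hδ₁ hδ₂, fun h hh hδ y hy hyx => ?_⟩
  have hgy : ‖g y - g x‖ < ε / 2 := by
    rw [← dist_eq_norm]; exact hcont hy (by rw [dist_eq_norm]; exact hyx.trans_le (min_le_right _ _))
  calc infDist (y + h • g y) K ≤ infDist (y + h • g x) K + dist (y + h • g y) (y + h • g x) :=
        infDist_le_infDist_add_dist
    _ = infDist (y + h • g x) K + h * ‖g y - g x‖ := by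
        rw [dist_add_left, dist_eq_norm, ← smul_sub, norm_smul, Real.norm_of_nonneg hh.le]
    _ < ε / 2 * h + h * (ε / 2) := by
        gcongr
        exact htan h hh (hδ.trans_le (min_le_left _ _)) y hy (hyx.trans_le (min_le_left _ _))
    _ = ε * h := by ring

end TangentCone

theorem resolvent_tangency_estimate_general
    {E : Type*} [NormedAddCommGroup E] [NormedSpace ℝ E]
    (𝓚 : Set E) (hconv : Convex ℝ 𝓚)
    (M ω hstar : ℝ)
    (J : ℝ → E →L[ℝ] E)
    (hJinv : ∀ h : ℝ, 0 < h → h ≤ hstar → h * ω < 1 → ∀ x ∈ 𝓚, J h x ∈ 𝓚)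
    (hJnorm : ∀ h : ℝ, 0 < h → h ≤ hstar → h * ω < 1 → ‖J h‖ ≤ M / (1 - h * ω))
    (g : E → E) (hgcont : ContinuousOn g 𝓚)
    (hgtan : ∀ x ∈ 𝓚,
      g x ∈ closure (⋃ h ∈ Set.Ioi (0:ℝ), (fun k => h⁻¹ • (k - x)) '' 𝓚)) :
    ∀ x ∈ 𝓚, ∀ ε > (0:ℝ), ∃ δ > (0:ℝ), ∀ h : ℝ, 0 < h → h < δ → h ≤ hstar → h * ω < 1 →
      ∀ y ∈ 𝓚, ‖y - x‖ < δ →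
        Metric.infDist (J h (y + h • g y)) 𝓚 < ε * h := by
  intro x hx ε hε
  obtain ⟨δ₀, hδ₀, hbound⟩ := exists_pos_forall_div_one_sub_mul_lt M ω
  have hC : 0 < |M| + 1 := by positivity
  obtain ⟨δ₁, hδ₁, hdist⟩ :=
    hconv.infDist_add_smul_apply_lt_of_mem_closure_tangent (hgcont x hx) (hgtan x hx)
      (div_pos hε hC)
  refine ⟨min δ₀ δ₁, lt_min hδ₀ hδ₁, fun h hh hδ hhstar hhω y hy hyx => ?_⟩
  have hJ : ‖J h‖ < |M| + 1 := (hJnorm h hh hhstar hhω).trans_lt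
    (hbound h (by rw [abs_of_pos hh]; exact hδ.trans_le (min_le_left _ _)))
  calc infDist (J h (y + h • g y)) 𝓚 ≤ ‖J h‖ * infDist (y + h • g y) 𝓚 :=
        (J h).lipschitz.infDist_le_mul_of_mapsTo (hJinv h hh hhstar hhω) _
    _ ≤ ‖J h‖ * (ε / (|M| + 1) * h) := by
        gcongr
        exact (hdist h hh (hδ.trans_le (min_le_right _ _)) y hy
          (hyx.trans_le (min_le_right _ _))).le
    _ < (|M| + 1) * (ε / (|M| + 1) * h) := by gcongr
    _ = ε * h := by field_simp

/-- Let `𝓚 ⊆ E` be nonempty closed convex, and let `(J_h)` be a family of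
continuous linear operators with `J_h(𝓚) ⊆ 𝓚` and `‖J_h‖ ≤ M/(1 - hω)` for `0 < h ≤ h*`,
`hω < 1`.  If `g : 𝓚 → E` is continuous and tangent to `𝓚`, then
`d(J_h(y + h g(y)), 𝓚)/h → 0` as `h → 0⁺` and `y → x` within `𝓚`, for every `x ∈ 𝓚`. -/
theorem resolvent_tangency_estimate
    {E : Type*} [NormedAddCommGroup E] [NormedSpace ℝ E] [CompleteSpace E]
    (𝓚 : Set E) (hne : 𝓚.Nonempty) (hcl : IsClosed 𝓚) (hconv : Convex ℝ 𝓚)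
    (M ω hstar : ℝ) (hM : 1 ≤ M) (hstar_pos : 0 < hstar)
    (J : ℝ → E →L[ℝ] E)
    (hJinv : ∀ h : ℝ, 0 < h → h ≤ hstar → h * ω < 1 → ∀ x ∈ 𝓚, J h x ∈ 𝓚)
    (hJnorm : ∀ h : ℝ, 0 < h → h ≤ hstar → h * ω < 1 → ‖J h‖ ≤ M / (1 - h * ω))
    (g : E → E) (hgcont : ContinuousOn g 𝓚)
    (hgtan : ∀ x ∈ 𝓚,
      g x ∈ closure (⋃ h ∈ Set.Ioi (0:ℝ), (fun k => h⁻¹ • (k - x)) '' 𝓚)) :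
    ∀ x ∈ 𝓚, ∀ ε > (0:ℝ), ∃ δ > (0:ℝ), ∀ h : ℝ, 0 < h → h < δ → h ≤ hstar → h * ω < 1 →
      ∀ y ∈ 𝓚, ‖y - x‖ < δ →
        Metric.infDist (J h (y + h • g y)) 𝓚 < ε * h :=
  resolvent_tangency_estimate_general 𝓚 hconv M ω hstar J hJinv hJnorm g hgcont hgtan
end

section
/- Let E be a real Banach space and 𝓚 ⊆ E nonempty closed convex. Let F : [0,1] × 𝓚 → (nonempty subsets of E) be Hausdorff upper semicontinuous (jointly in (t,x)), suppose there is c > 0 with ‖y‖ ≤ c(1 + ‖x‖) for all t ∈ [0,1], x ∈ 𝓚, y ∈ F(t,x), and suppose F(t,x) ∩ T_𝓚(x) ≠ ∅ for all t, x. Define F̂(t,x) := closure(convexHull(⋃_{0≤s≤t} F(s,x))). Then: (i) the map (t,x) ↦ ⋃_{0≤s≤t} F(s,x) is Hausdorff upper semicontinuous on [0,1] × 𝓚; (ii) F̂ is Hausdorff upper semicontinuous on [0,1] × 𝓚; (iii) each F̂(t,x) is nonempty closed convex and ‖y‖ ≤ c(1 + ‖x‖) for all y ∈ F̂(t,x);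 and (iv) F̂(t,x) ∩ T_𝓚(x) ≠ ∅ for all t ∈ [0,1], x ∈ 𝓚. -/
open Metric Set

/-!
Parts (iii) and (iv) hold because `F(t,x) ⊆ F̂(t,x)` and closed balls are closed and convex.
For (i), H-usc of `F` at the points of the compact segment `[0,t₀] × {x₀}` is uniform by the
Lebesgue number lemma: there is one `δ` such that every `(s,x)` within `δ` of that segment has
`F(s,x)` in the `ε`-thickening of some `F(u,x₀)` with `u ≤ t₀`. Since `s ≤ t < t₀ + δ`, every
`(s,x)` with `s ≤ t` is within `δ` of `(min s t₀, x₀)`. For (ii), the `ε`-thickening of a convex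
set is convex, so passing to closed convex hulls costs only an arbitrarily small loss in `ε`.
-/

section HausdorffUSC

variable {α Y : Type*} [PseudoMetricSpace α] [PseudoMetricSpace Y]

/-- Phrased with `thickening`, which agrees with `{y | infDist y (G a) < ε}` only when `G a` is
nonempty, since `infDist y ∅ = 0`. -/
def HausdorffUSCWithinAt (G : α → Set Y) (D : Set α) (a : α) : Prop :=
  ∀ ε > 0, ∃ δ > 0, ∀ p ∈ D, dist p a < δ → G p ⊆ thickening ε (G a)

theorem HausdorffUSCWithinAt.exists_uniform_of_isCompact {G : α → Set Y} {D C : Set α}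
    (hC : IsCompact C) (hG : ∀ c ∈ C, HausdorffUSCWithinAt G D c) {ε : ℝ} (hε : 0 < ε) :
    ∃ δ > 0, ∀ c ∈ C, ∀ p ∈ D, dist p c < δ → ∃ c' ∈ C, G p ⊆ thickening ε (G c') := by
  choose! r hr hrG using fun c hc => hG c hc ε hε
  obtain ⟨δ, hδ, hball⟩ := lebesgue_number_lemma_of_metric (c := fun c : C => ball (c : α) (r c))
    hC (fun _ => isOpen_ball) fun c hc => mem_iUnion.2 ⟨⟨c, hc⟩, mem_ball_self (hr c hc)⟩
  refine ⟨δ, hδ, fun c hc p hp hpc => ?_⟩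
  obtain ⟨⟨c', hc'⟩, hsub⟩ := hball c hc
  exact ⟨c', hc', hrG c' hc' p hp (hsub hpc)⟩

theorem dist_min_le_dist_of_le {s t t₀ : ℝ} (hst : s ≤ t) : dist s (min s t₀) ≤ dist t t₀ := by
  rcases le_total s t₀ with h | h
  · simp [min_eq_left h]
  · rw [min_eq_right h, Real.dist_eq, Real.dist_eq, abs_of_nonneg (sub_nonneg.2 h)]
    exact (sub_le_sub_right hst t₀).trans (le_abs_self _)

theorem HausdorffUSCWithinAt.biUnion_Icc {X : Type*} [PseudoMetricSpace X] {F : ℝ → X → Set Y}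
    {a b t₀ : ℝ} {K : Set X} {x₀ : X} (ht₀ : t₀ ∈ Icc a b)
    (hF : ∀ s ∈ Icc a t₀, HausdorffUSCWithinAt (Function.uncurry F) (Icc a b ×ˢ K) (s, x₀)) :
    HausdorffUSCWithinAt (fun p => ⋃ s ∈ Icc a p.1, F s p.2) (Icc a b ×ˢ K) (t₀, x₀) := by
  intro ε hε
  obtain ⟨δ, hδ, hunif⟩ := HausdorffUSCWithinAt.exists_uniform_of_isCompact
    (C := Icc a t₀ ×ˢ {x₀}) (isCompact_Icc.prod isCompact_singleton)
    (by rintro ⟨s, _⟩ ⟨hs, rfl⟩; exact hF s hs) hε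
  refine ⟨δ, hδ, ?_⟩
  rintro ⟨t, x⟩ ⟨ht, hx⟩ hdist y hy
  obtain ⟨s, hs, hys⟩ := mem_iUnion₂.1 hy
  have hs_near : dist (s, x) (min s t₀, x₀) < δ := by
    rw [Prod.dist_eq] at hdist ⊢
    exact lt_of_le_of_lt (max_le_max_right _ (dist_min_le_dist_of_le hs.2)) hdist
  obtain ⟨⟨u, _⟩, ⟨hu, rfl⟩, hsub⟩ := hunif (min s t₀, x₀)
    ⟨⟨le_min hs.1 ht₀.1, min_le_right _ _⟩, rfl⟩ (s, x) ⟨⟨hs.1, hs.2.trans ht.2⟩, hx⟩ hs_near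
  exact thickening_subset_of_subset ε (subset_biUnion_of_mem hu) (hsub hys)

theorem hausdorffUSCWithinAt_prod_iff {X : Type*} [SeminormedAddCommGroup X] {G : ℝ × X → Set Y}
    {I : Set ℝ} {K : Set X} {t₀ : ℝ} {x₀ : X} (hne : (G (t₀, x₀)).Nonempty) :
    HausdorffUSCWithinAt G (I ×ˢ K) (t₀, x₀) ↔ ∀ ε > (0:ℝ), ∃ δ > (0:ℝ),
      ∀ t ∈ I, ∀ x ∈ K, |t - t₀| < δ → ‖x - x₀‖ < δ →
        G (t, x) ⊆ {y : Y | infDist y (G (t₀, x₀)) < ε} := by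
  simp only [HausdorffUSCWithinAt, Prod.forall, mem_prod, and_imp, Prod.dist_eq, max_lt_iff,
    Real.dist_eq, ← mem_thickening_iff_infDist_lt hne, ofPred_mem_eq]
  simp only [dist_eq_norm]
  exact forall₂_congr fun _ _ => exists_congr fun _ => and_congr_right fun _ =>
    ⟨fun h t ht x hx => h t x ht hx, fun h t x ht hx => h t ht x hx⟩

variable {E : Type*} [NormedAddCommGroup E] [NormedSpace ℝ E]

theorem closure_convexHull_subset_thickening {A B : Set E} {r r' : ℝ}
    (h : A ⊆ thickening r B) (hr : r < r') (hr' : 0 < r') :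
    closure (convexHull ℝ A) ⊆ thickening r' (closure (convexHull ℝ B)) :=
  calc closure (convexHull ℝ A)
      ⊆ closure (thickening r (convexHull ℝ B)) :=
        closure_mono <| convexHull_min (h.trans (thickening_subset_of_subset r
          (subset_convexHull ℝ B))) ((convex_convexHull ℝ B).thickening r)
    _ ⊆ cthickening r (convexHull ℝ B) := closure_thickening_subset_cthickening r _
    _ ⊆ thickening r' (convexHull ℝ B) := cthickening_subset_thickening' hr' hr _
    _ ⊆ thickening r' (closure (convexHull ℝ B)) := thickening_subset_of_subset r' subset_closure

theorem HausdorffUSCWithinAt.closure_convexHull {G : α → Set E} {D : Set α} {a : α}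
    (hG : HausdorffUSCWithinAt G D a) :
    HausdorffUSCWithinAt (fun p => closure (convexHull ℝ (G p))) D a := by
  intro ε hε
  obtain ⟨δ, hδ, hGδ⟩ := hG (ε / 2) (half_pos hε)
  exact ⟨δ, hδ, fun p hp hpa =>
    closure_convexHull_subset_thickening (hGδ p hp hpa) (half_lt_self hε) hε⟩

end HausdorffUSC

theorem hull_of_history_map_properties_general
    {E : Type*} [NormedAddCommGroup E] [NormedSpace ℝ E]
    (𝓚 : Set E)
    (F : ℝ → E → Set E)
    (hFne : ∀ t ∈ Set.Icc (0:ℝ) 1, ∀ x ∈ 𝓚, (F t x).Nonempty)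
    (hFusc : ∀ t₀ ∈ Set.Icc (0:ℝ) 1, ∀ x₀ ∈ 𝓚, ∀ ε > (0:ℝ), ∃ δ > (0:ℝ),
      ∀ t ∈ Set.Icc (0:ℝ) 1, ∀ x ∈ 𝓚, |t - t₀| < δ → ‖x - x₀‖ < δ →
        F t x ⊆ {y : E | Metric.infDist y (F t₀ x₀) < ε})
    (c : ℝ)
    (hF3 : ∀ t ∈ Set.Icc (0:ℝ) 1, ∀ x ∈ 𝓚, ∀ y ∈ F t x, ‖y‖ ≤ c * (1 + ‖x‖))
    (hF4 : ∀ t ∈ Set.Icc (0:ℝ) 1, ∀ x ∈ 𝓚,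
      (F t x ∩ closure (⋃ h ∈ Set.Ioi (0:ℝ), (fun k => h⁻¹ • (k - x)) '' 𝓚)).Nonempty)
    (Fhat : ℝ → E → Set E)
    (hFhat : ∀ t x, Fhat t x = closure (convexHull ℝ (⋃ s ∈ Set.Icc (0:ℝ) t, F s x))) :
    -- (i) the union map is H-usc
    (∀ t₀ ∈ Set.Icc (0:ℝ) 1, ∀ x₀ ∈ 𝓚, ∀ ε > (0:ℝ), ∃ δ > (0:ℝ),
      ∀ t ∈ Set.Icc (0:ℝ) 1, ∀ x ∈ 𝓚, |t - t₀| < δ → ‖x - x₀‖ < δ →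
        (⋃ s ∈ Set.Icc (0:ℝ) t, F s x) ⊆
          {y : E | Metric.infDist y (⋃ s ∈ Set.Icc (0:ℝ) t₀, F s x₀) < ε}) ∧
    -- (ii) F̂ is H-usc
    (∀ t₀ ∈ Set.Icc (0:ℝ) 1, ∀ x₀ ∈ 𝓚, ∀ ε > (0:ℝ), ∃ δ > (0:ℝ),
      ∀ t ∈ Set.Icc (0:ℝ) 1, ∀ x ∈ 𝓚, |t - t₀| < δ → ‖x - x₀‖ < δ →
        Fhat t x ⊆ {y : E | Metric.infDist y (Fhat t₀ x₀) < ε}) ∧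
    -- (iii) nonempty closed convex values with sublinear growth
    (∀ t ∈ Set.Icc (0:ℝ) 1, ∀ x ∈ 𝓚, (Fhat t x).Nonempty ∧ IsClosed (Fhat t x) ∧
      Convex ℝ (Fhat t x) ∧ ∀ y ∈ Fhat t x, ‖y‖ ≤ c * (1 + ‖x‖)) ∧
    -- (iv) F̂ is tangent to 𝓚
    (∀ t ∈ Set.Icc (0:ℝ) 1, ∀ x ∈ 𝓚,
      (Fhat t x ∩
        closure (⋃ h ∈ Set.Ioi (0:ℝ), (fun k => h⁻¹ • (k - x)) '' 𝓚)).Nonempty) := by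
  obtain rfl : Fhat = fun t x => closure (convexHull ℝ (⋃ s ∈ Icc (0:ℝ) t, F s x)) :=
    funext fun t => funext (hFhat t)
  have hF_sub : ∀ t ∈ Icc (0:ℝ) 1, ∀ x, F t x ⊆ ⋃ s ∈ Icc (0:ℝ) t, F s x :=
    fun t ht _ => subset_biUnion_of_mem (u := fun s => F s _) ⟨ht.1, le_rfl⟩
  have hU_sub : ∀ (t : ℝ) (x : E), (⋃ s ∈ Icc (0:ℝ) t, F s x) ⊆
      closure (convexHull ℝ (⋃ s ∈ Icc (0:ℝ) t, F s x)) :=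
    fun _ _ => (subset_convexHull ℝ _).trans subset_closure
  have hUne : ∀ t ∈ Icc (0:ℝ) 1, ∀ x ∈ 𝓚, (⋃ s ∈ Icc (0:ℝ) t, F s x).Nonempty :=
    fun t ht x hx => (hFne t ht x hx).mono (hF_sub t ht x)
  have hU_usc : ∀ t₀ ∈ Icc (0:ℝ) 1, ∀ x₀ ∈ 𝓚, HausdorffUSCWithinAt
      (fun p => ⋃ s ∈ Icc 0 p.1, F s p.2) (Icc (0:ℝ) 1 ×ˢ 𝓚) (t₀, x₀) :=
    fun t₀ ht₀ x₀ hx₀ => HausdorffUSCWithinAt.biUnion_Icc ht₀ fun s hs =>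
      have hs' : s ∈ Icc (0:ℝ) 1 := ⟨hs.1, hs.2.trans ht₀.2⟩
      (hausdorffUSCWithinAt_prod_iff (hFne s hs' x₀ hx₀)).2 (hFusc s hs' x₀ hx₀)
  refine ⟨fun t₀ ht₀ x₀ hx₀ => (hausdorffUSCWithinAt_prod_iff (hUne t₀ ht₀ x₀ hx₀)).1
      (hU_usc t₀ ht₀ x₀ hx₀),
    fun t₀ ht₀ x₀ hx₀ => (hausdorffUSCWithinAt_prod_iff
      ((hUne t₀ ht₀ x₀ hx₀).mono (hU_sub t₀ x₀))).1 (hU_usc t₀ ht₀ x₀ hx₀).closure_convexHull,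
    fun t ht x hx => ⟨(hUne t ht x hx).mono (hU_sub t x), isClosed_closure,
      (convex_convexHull ℝ _).closure, fun y hy => ?_⟩,
    fun t ht x hx => ?_⟩
  · have hU_ball : ⋃ s ∈ Icc (0:ℝ) t, F s x ⊆ closedBall 0 (c * (1 + ‖x‖)) :=
      iUnion₂_subset fun s hs z hz =>
        mem_closedBall_zero_iff.2 (hF3 s ⟨hs.1, hs.2.trans ht.2⟩ x hx z hz)
    exact mem_closedBall_zero_iff.1
      (closure_minimal (convexHull_min hU_ball (convex_closedBall 0 _)) isClosed_closedBall hy)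
  · obtain ⟨y, hyF, hyT⟩ := hF4 t ht x hx
    exact ⟨y, hU_sub t x (hF_sub t ht x hyF), hyT⟩

/-- If `F : [0,1] × 𝓚 ⊸ E` is jointly H-usc, has sublinear growth and is
tangent to `𝓚`, then `F̂(t,x) := cl conv (⋃_{0≤s≤t} F(s,x))` has the same properties:
(i) `(t,x) ↦ ⋃_{0≤s≤t} F(s,x)` is H-usc; (ii) `F̂` is H-usc; (iii) the values of `F̂` are
nonempty closed convex with `‖y‖ ≤ c(1+‖x‖)`; (iv) `F̂` is tangent to `𝓚`. -/
theorem hull_of_history_map_properties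
    {E : Type*} [NormedAddCommGroup E] [NormedSpace ℝ E] [CompleteSpace E]
    (𝓚 : Set E) (hne : 𝓚.Nonempty) (hcl : IsClosed 𝓚) (hconv : Convex ℝ 𝓚)
    (F : ℝ → E → Set E)
    (hFne : ∀ t ∈ Set.Icc (0:ℝ) 1, ∀ x ∈ 𝓚, (F t x).Nonempty)
    (hFusc : ∀ t₀ ∈ Set.Icc (0:ℝ) 1, ∀ x₀ ∈ 𝓚, ∀ ε > (0:ℝ), ∃ δ > (0:ℝ),
      ∀ t ∈ Set.Icc (0:ℝ) 1, ∀ x ∈ 𝓚, |t - t₀| < δ → ‖x - x₀‖ < δ →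
        F t x ⊆ {y : E | Metric.infDist y (F t₀ x₀) < ε})
    (c : ℝ) (hc : 0 < c)
    (hF3 : ∀ t ∈ Set.Icc (0:ℝ) 1, ∀ x ∈ 𝓚, ∀ y ∈ F t x, ‖y‖ ≤ c * (1 + ‖x‖))
    (hF4 : ∀ t ∈ Set.Icc (0:ℝ) 1, ∀ x ∈ 𝓚,
      (F t x ∩ closure (⋃ h ∈ Set.Ioi (0:ℝ), (fun k => h⁻¹ • (k - x)) '' 𝓚)).Nonempty)
    (Fhat : ℝ → E → Set E)
    (hFhat : ∀ t x, Fhat t x = closure (convexHull ℝ (⋃ s ∈ Set.Icc (0:ℝ) t, F s x))) :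
    -- (i) the union map is H-usc
    (∀ t₀ ∈ Set.Icc (0:ℝ) 1, ∀ x₀ ∈ 𝓚, ∀ ε > (0:ℝ), ∃ δ > (0:ℝ),
      ∀ t ∈ Set.Icc (0:ℝ) 1, ∀ x ∈ 𝓚, |t - t₀| < δ → ‖x - x₀‖ < δ →
        (⋃ s ∈ Set.Icc (0:ℝ) t, F s x) ⊆
          {y : E | Metric.infDist y (⋃ s ∈ Set.Icc (0:ℝ) t₀, F s x₀) < ε}) ∧
    -- (ii) F̂ is H-usc
    (∀ t₀ ∈ Set.Icc (0:ℝ) 1, ∀ x₀ ∈ 𝓚, ∀ ε > (0:ℝ), ∃ δ > (0:ℝ),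
      ∀ t ∈ Set.Icc (0:ℝ) 1, ∀ x ∈ 𝓚, |t - t₀| < δ → ‖x - x₀‖ < δ →
        Fhat t x ⊆ {y : E | Metric.infDist y (Fhat t₀ x₀) < ε}) ∧
    -- (iii) nonempty closed convex values with sublinear growth
    (∀ t ∈ Set.Icc (0:ℝ) 1, ∀ x ∈ 𝓚, (Fhat t x).Nonempty ∧ IsClosed (Fhat t x) ∧
      Convex ℝ (Fhat t x) ∧ ∀ y ∈ Fhat t x, ‖y‖ ≤ c * (1 + ‖x‖)) ∧
    -- (iv) F̂ is tangent to 𝓚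
    (∀ t ∈ Set.Icc (0:ℝ) 1, ∀ x ∈ 𝓚,
      (Fhat t x ∩
        closure (⋃ h ∈ Set.Ioi (0:ℝ), (fun k => h⁻¹ • (k - x)) '' 𝓚)).Nonempty) :=
  hull_of_history_map_properties_general 𝓚 F hFne hFusc c hF3 hF4 Fhat hFhat
end

section
/- Let E be a real Hilbert space, (S(t))_{t≥0} a C₀-semigroup on E, T > 0, and C ⊆ E a nonempty closed convex bounded set. Let x₀ ∈ E and let w : [0,T] → E be Bochner integrable with w(s) ∈ C for a.e. s ∈ [0,T], and suppose x₀ = S(t)x₀ + ∫₀ᵗ S(t−s) w(s) ds for every t ∈ [0,T]. Then there exists y ∈ C such that (S(t)x₀ − x₀)/t → −y as t → 0⁺; i.e., x₀ belongs to the domain of the generator A of the semigroup and Ax₀ = −y ∈ −C. -/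
/-!
Applying `S(h)` to the stationarity identity at time `t` and subtracting it from the identity at
time `t + h` gives `x₀ - S(h)x₀ = ∫ₜ^{t+h} S(t+h-s) w(s) ds` for every admissible `t`. Choose
`t = t₀`, a right Lebesgue point of `w` with `w(t₀) ∈ C`. Banach–Steinhaus bounds `‖S(τ)‖` for
small `τ`, so `h⁻¹ ∫ₜ₀^{t₀+h} S(t₀+h-s)(w(s) - w(t₀)) ds → 0`. Also
`h⁻¹ ∫₀ʰ S(τ) w(t₀) dτ → w(t₀)` by the fundamental theorem of calculus. Together these give
`h⁻¹ (S(h)x₀ - x₀) → -w(t₀)`.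
-/

open MeasureTheory Filter Set Topology

section UniformBound

variable {X E F : Type*} [TopologicalSpace X] [NormedAddCommGroup E] [NormedSpace ℝ E]
  [CompleteSpace E] [NormedAddCommGroup F] [NormedSpace ℝ F]
  {S : X → E →L[ℝ] F} {K : Set X}

theorem IsCompact.exists_forall_opNorm_le (hK : IsCompact K)
    (hS : ∀ x, ContinuousOn (fun t => S t x) K) : ∃ M, ∀ t ∈ K, ‖S t‖ ≤ M := by
  obtain ⟨M, hM⟩ := banach_steinhaus (g := fun t : K => S t) fun x =>
    (hK.exists_bound_of_continuousOn (hS x)).imp fun _ h t => h t t.2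
  exact ⟨M, fun t ht => hM ⟨t, ht⟩⟩

theorem IsCompact.continuousOn_prod_apply (hK : IsCompact K)
    (hS : ∀ x, ContinuousOn (fun t => S t x) K) :
    ContinuousOn (fun p : X × E => S p.1 p.2) (K ×ˢ univ) := by
  obtain ⟨M, hM⟩ := hK.exists_forall_opNorm_le hS
  refine continuousOn_prod_of_continuousOn_lipschitzOnWith' _ (Real.toNNReal M)
    (fun t ht => ?_) (fun x _ => hS x)
  exact (ContinuousLinearMap.lipschitzWith_of_opNorm_le
    ((hM t ht).trans (Real.le_coe_toNNReal M))).lipschitzOnWith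

end UniformBound

theorem ae_tendsto_inv_mul_integral_norm_sub {E : Type*} [NormedAddCommGroup E] {f : ℝ → E}
    {a b : ℝ} (hf : IntegrableOn f (Icc a b)) :
    ∀ᵐ t ∂volume.restrict (Ioo a b),
      Tendsto (fun h => h⁻¹ * ∫ s in t..t + h, ‖f s - f t‖) (𝓝[>] 0) (𝓝 0) := by
  have hleb := VitaliFamily.ae_tendsto_average_norm_sub
    (IsUnifLocDoublingMeasure.vitaliFamily (volume : Measure ℝ) 1)
    ((integrable_indicator_iff measurableSet_Icc).2 hf).locallyIntegrable
  filter_upwards [ae_restrict_of_ae hleb, ae_restrict_mem measurableSet_Ioo] with t ht hmem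
  have hright : Tendsto (t + ·) (𝓝[>] 0) (𝓝[>] t) :=
    (map_add_left_nhdsGT (c := t) (a := 0)).trans_le (by rw [add_zero])
  refine ((ht.comp (Real.tendsto_Icc_vitaliFamily_right t)).comp hright).congr' ?_
  filter_upwards [Ioo_mem_nhdsGT (sub_pos.2 hmem.2)] with h hh
  have hsub : Icc t (t + h) ⊆ Icc a b :=
    Icc_subset_Icc hmem.1.le (by linarith [hh.2])
  have htI : t ∈ Icc a b := Ioo_subset_Icc_self hmem
  rw [Function.comp_apply, Function.comp_apply, setAverage_eq,
    Real.volume_real_Icc_of_le (by linarith [hh.1]), add_sub_cancel_left, smul_eq_mul,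
    intervalIntegral.integral_of_le (by linarith [hh.1]), ← integral_Icc_eq_integral_Ioc]
  congr 1
  refine setIntegral_congr_fun measurableSet_Icc fun s hs => ?_
  simp only [indicator_of_mem (hsub hs), indicator_of_mem htI]

section Semigroup

variable {E : Type*} [NormedAddCommGroup E] [NormedSpace ℝ E] [CompleteSpace E]
  {S : ℝ → E →L[ℝ] E}

theorem intervalIntegrable_apply_sub_of_continuousOn
    (hS : ∀ x, ContinuousOn (fun t => S t x) (Ici 0))
    {w : ℝ → E} {a b c : ℝ} (hab : a ≤ b) (hbc : b ≤ c) (hw : IntegrableOn w (Icc a b)) :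
    IntervalIntegrable (fun s => S (c - s) (w s)) volume a b := by
  have hK : Icc (c - b) (c - a) ⊆ Ici 0 := fun τ hτ => (sub_nonneg.2 hbc).trans hτ.1
  have hcab : c - b ≤ c - a := by linarith
  have hmem : ∀ s ∈ Icc a b, c - s ∈ Icc (c - b) (c - a) := fun s hs =>
    ⟨by linarith [hs.2], by linarith [hs.1]⟩
  obtain ⟨M, hM⟩ := isCompact_Icc.exists_forall_opNorm_le fun x => (hS x).mono hK
  -- clamping the time into `[c - b, c - a]` makes the action continuous on all of `ℝ × E`
  have hcont : Continuous fun p : ℝ × E => S (projIcc _ _ hcab p.1) p.2 :=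
    (isCompact_Icc.continuousOn_prod_apply fun x => (hS x).mono hK).comp_continuous
      ((continuous_subtype_val.comp (continuous_projIcc (h := hcab))).prodMap continuous_id)
      fun p => ⟨Subtype.mem _, mem_univ _⟩
  have hmeas : AEStronglyMeasurable (fun s => S (c - s) (w s)) (volume.restrict (Icc a b)) := by
    refine (hcont.comp_aestronglyMeasurable
      ((continuous_sub_left c).aestronglyMeasurable.prodMk
        hw.aestronglyMeasurable)).congr ?_
    filter_upwards [ae_restrict_mem measurableSet_Icc] with s hs
    simp only [projIcc_of_mem hcab (hmem s hs)]
  rw [intervalIntegrable_iff_integrableOn_Icc_of_le hab]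
  refine Integrable.mono' (hw.norm.const_mul M) hmeas ?_
  filter_upwards [ae_restrict_mem measurableSet_Icc] with s hs
  exact (S (c - s)).le_of_opNorm_le (hM _ (hmem s hs)) _

theorem sub_apply_eq_integral_of_stationary
    (hSadd : ∀ s t : ℝ, 0 ≤ s → 0 ≤ t → S (t + s) = (S t).comp (S s))
    (hScont : ∀ x, ContinuousOn (fun t => S t x) (Ici 0))
    {w : ℝ → E} {x₀ : E} {t h : ℝ} (ht : 0 ≤ t) (hh : 0 ≤ h)
    (hw : IntegrableOn w (Icc 0 (t + h)))
    (hstat_t : x₀ = S t x₀ + ∫ s in 0..t, S (t - s) (w s))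
    (hstat_th : x₀ = S (t + h) x₀ + ∫ s in 0..t + h, S (t + h - s) (w s)) :
    x₀ - S h x₀ = ∫ s in t..t + h, S (t + h - s) (w s) := by
  have hw_t : IntegrableOn w (Icc 0 t) := hw.mono_set (Icc_subset_Icc_right (by linarith))
  have hshift : S h x₀ = S (t + h) x₀ + ∫ s in 0..t, S (t + h - s) (w s) := by
    conv_lhs => rw [hstat_t]
    rw [map_add, ← (S h).intervalIntegral_comp_comm
      (intervalIntegrable_apply_sub_of_continuousOn hScont ht le_rfl hw_t), add_comm t h,
      hSadd t h ht hh]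
    congr 1
    refine intervalIntegral.integral_congr fun s hs => ?_
    rw [uIcc_of_le ht] at hs
    simp only [show h + t - s = h + (t - s) by ring, hSadd (t - s) h (by linarith [hs.2]) hh]
    rfl
  rw [← intervalIntegral.integral_add_adjacent_intervals
    (intervalIntegrable_apply_sub_of_continuousOn hScont ht (by linarith) hw_t)
    (intervalIntegrable_apply_sub_of_continuousOn hScont (by linarith) le_rfl
      (hw.mono_set (Icc_subset_Icc_left ht)))] at hstat_th
  rw [hshift]
  nth_rewrite 1 [hstat_th]
  abel

theorem tendsto_inv_smul_integral_apply_sub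
    (hS0 : S 0 = ContinuousLinearMap.id ℝ E)
    (hScont : ∀ x, ContinuousOn (fun t => S t x) (Ici 0))
    {w : ℝ → E} {v : E} {t₀ b : ℝ} (hb : t₀ < b) (hw : IntegrableOn w (Icc t₀ b))
    (hleb : Tendsto (fun h => h⁻¹ * ∫ s in t₀..t₀ + h, ‖w s - v‖) (𝓝[>] 0) (𝓝 0)) :
    Tendsto (fun h => h⁻¹ • ∫ s in t₀..t₀ + h, S (t₀ + h - s) (w s)) (𝓝[>] 0) (𝓝 v) := by
  obtain ⟨M, hM⟩ := isCompact_Icc.exists_forall_opNorm_le fun x =>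
    (hScont x).mono (Icc_subset_Ici_self : Icc 0 (b - t₀) ⊆ Ici 0)
  have horbit : Tendsto (fun h => h⁻¹ • ∫ τ in 0..h, S τ v) (𝓝[>] 0) (𝓝 v) := by
    have hderiv : HasDerivWithinAt (fun h => ∫ τ in 0..h, S τ v) (S 0 v) (Ici 0) 0 :=
      intervalIntegral.integral_hasDerivWithinAt_right IntervalIntegrable.refl
        (((hScont v).mono Ioi_subset_Ici_self).stronglyMeasurableAtFilter_nhdsWithin
          measurableSet_Ioi 0)
        ((hScont v 0 self_mem_Ici).mono Ioi_subset_Ici_self)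
    have hslope := hasDerivWithinAt_iff_tendsto_slope.1 hderiv
    rw [hS0, Ici_sdiff_left] at hslope
    refine hslope.congr fun h => ?_
    simp [slope_def_module]
  have hbound : ∀ᶠ h in 𝓝[>] 0,
      ‖h⁻¹ • (∫ s in t₀..t₀ + h, S (t₀ + h - s) (w s)) - h⁻¹ • ∫ τ in 0..h, S τ v‖ ≤
        M * (h⁻¹ * ∫ s in t₀..t₀ + h, ‖w s - v‖) := by
    filter_upwards [Ioo_mem_nhdsGT (sub_pos.2 hb)] with h hh
    have hle : t₀ ≤ t₀ + h := by linarith [hh.1]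
    have hwh : IntegrableOn w (Icc t₀ (t₀ + h)) :=
      hw.mono_set (Icc_subset_Icc_right (by linarith [hh.2]))
    have hconv : ∫ τ in 0..h, S τ v = ∫ s in t₀..t₀ + h, S (t₀ + h - s) v := by
      rw [intervalIntegral.integral_comp_sub_left (fun τ => S τ v)]; simp
    rw [hconv, ← smul_sub, ← intervalIntegral.integral_sub
      (intervalIntegrable_apply_sub_of_continuousOn hScont hle le_rfl hwh)
      (intervalIntegrable_apply_sub_of_continuousOn hScont hle le_rfl
        (integrableOn_const measure_Icc_lt_top.ne))]
    have hnorm : ∀ s ∈ Ioc t₀ (t₀ + h),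
        ‖S (t₀ + h - s) (w s) - S (t₀ + h - s) v‖ ≤ M * ‖w s - v‖ := fun s hs => by
        rw [← map_sub]
        exact (S _).le_of_opNorm_le (hM _ ⟨by linarith [hs.2], by linarith [hs.1, hh.2]⟩) _
    have hint : IntervalIntegrable (fun s => M * ‖w s - v‖) volume t₀ (t₀ + h) :=
      (intervalIntegrable_iff_integrableOn_Icc_of_le hle).2
        ((hwh.sub (integrableOn_const measure_Icc_lt_top.ne)).norm.const_mul M)
    calc ‖h⁻¹ • ∫ s in t₀..t₀ + h, (S (t₀ + h - s) (w s) - S (t₀ + h - s) v)‖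
        ≤ h⁻¹ * ∫ s in t₀..t₀ + h, M * ‖w s - v‖ := by
          rw [norm_smul, Real.norm_of_nonneg (inv_nonneg.2 hh.1.le)]
          exact mul_le_mul_of_nonneg_left
            (intervalIntegral.norm_integral_le_of_norm_le hle (ae_of_all _ hnorm) hint)
            (inv_nonneg.2 hh.1.le)
      _ = M * (h⁻¹ * ∫ s in t₀..t₀ + h, ‖w s - v‖) := by
          rw [intervalIntegral.integral_const_mul]; ring
  have hdiff := squeeze_zero_norm' hbound (by simpa using hleb.const_mul M)
  simpa using hdiff.add horbit

end Semigroup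

theorem stationary_point_in_generator_domain_general
    {E : Type*} [NormedAddCommGroup E] [InnerProductSpace ℝ E] [CompleteSpace E]
    (S : ℝ → E →L[ℝ] E)
    (hS0 : S 0 = ContinuousLinearMap.id ℝ E)
    (hSadd : ∀ s t : ℝ, 0 ≤ s → 0 ≤ t → S (t + s) = (S t).comp (S s))
    (hScont : ∀ x : E, ContinuousOn (fun t => S t x) (Set.Ici (0:ℝ)))
    (T : ℝ) (hT : 0 < T)
    (C : Set E)
    (x₀ : E) (w : ℝ → E) (hw : IntegrableOn w (Set.Icc 0 T))
    (hwC : ∀ᵐ s ∂(volume.restrict (Set.Icc (0:ℝ) T)), w s ∈ C)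
    (hstat : ∀ t ∈ Set.Icc (0:ℝ) T,
      x₀ = S t x₀ + ∫ s in (0:ℝ)..t, S (t - s) (w s)) :
    ∃ y ∈ C, Tendsto (fun t : ℝ => t⁻¹ • (S t x₀ - x₀))
      (nhdsWithin 0 (Set.Ioi 0)) (nhds (-y)) := by
  obtain ⟨t₀, ht₀, hleb, hwt₀⟩ : ∃ t₀ ∈ Ioo 0 T,
      Tendsto (fun h => h⁻¹ * ∫ s in t₀..t₀ + h, ‖w s - w t₀‖) (𝓝[>] 0) (𝓝 0) ∧ w t₀ ∈ C :=
    Measure.exists_mem_of_measure_ne_zero_of_ae (by simpa using hT)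
      ((ae_tendsto_inv_mul_integral_norm_sub hw).and
        (ae_restrict_of_ae_restrict_of_subset Ioo_subset_Icc_self hwC))
  refine ⟨w t₀, hwt₀, ?_⟩
  have hlim := tendsto_inv_smul_integral_apply_sub hS0 hScont ht₀.2
    (hw.mono_set (Icc_subset_Icc_left ht₀.1.le)) hleb
  refine hlim.neg.congr' ?_
  filter_upwards [Ioo_mem_nhdsGT (sub_pos.2 ht₀.2)] with h hh
  have hth : t₀ + h ≤ T := by linarith [hh.2]
  rw [← sub_apply_eq_integral_of_stationary hSadd hScont ht₀.1.le hh.1.le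
    (hw.mono_set (Icc_subset_Icc_right hth)) (hstat t₀ ⟨ht₀.1.le, ht₀.2.le⟩)
    (hstat (t₀ + h) ⟨by linarith [ht₀.1, hh.1], hth⟩), ← smul_neg, neg_sub]

/-- Let `(S(t))` be a `C₀`-semigroup on a real Hilbert space, `C` a nonempty
closed convex bounded set, and `w : [0,T] → E` Bochner integrable with `w(s) ∈ C` a.e.  If
`x₀ = S(t)x₀ + ∫₀ᵗ S(t-s) w(s) ds` for every `t ∈ [0,T]`, then there is `y ∈ C` with
`(S(t)x₀ - x₀)/t → -y` as `t → 0⁺`; i.e. `x₀ ∈ D(A)` and `Ax₀ = -y ∈ -C`. -/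
theorem stationary_point_in_generator_domain
    {E : Type*} [NormedAddCommGroup E] [InnerProductSpace ℝ E] [CompleteSpace E]
    (S : ℝ → E →L[ℝ] E)
    (hS0 : S 0 = ContinuousLinearMap.id ℝ E)
    (hSadd : ∀ s t : ℝ, 0 ≤ s → 0 ≤ t → S (t + s) = (S t).comp (S s))
    (hScont : ∀ x : E, ContinuousOn (fun t => S t x) (Set.Ici (0:ℝ)))
    (T : ℝ) (hT : 0 < T)
    (C : Set E) (hCne : C.Nonempty) (hCcl : IsClosed C) (hCconv : Convex ℝ C)
    (hCbdd : Bornology.IsBounded C)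
    (x₀ : E) (w : ℝ → E) (hw : IntegrableOn w (Set.Icc 0 T))
    (hwC : ∀ᵐ s ∂(volume.restrict (Set.Icc (0:ℝ) T)), w s ∈ C)
    (hstat : ∀ t ∈ Set.Icc (0:ℝ) T,
      x₀ = S t x₀ + ∫ s in (0:ℝ)..t, S (t - s) (w s)) :
    ∃ y ∈ C, Tendsto (fun t : ℝ => t⁻¹ • (S t x₀ - x₀))
      (nhdsWithin 0 (Set.Ioi 0)) (nhds (-y)) :=
  stationary_point_in_generator_domain_general S hS0 hSadd hScont T hT C x₀ w hw hwC hstat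
end

section
/- Let E be a real Hilbert space, (S(t))_{t≥0} a C₀-semigroup on E, T > 0 and 0 < ξ < T. Let w : [0,T] → E be Bochner integrable and M ≥ 0 with ‖w(s)‖ ≤ M for a.e. s ∈ [ξ, T]. Then for every p ∈ E, (1/η) ⟨ ∫_ξ^{ξ+η} ( w(s) − S(ξ+η−s) w(s) ) ds , p ⟩ → 0 as η → 0⁺; that is, the vectors (1/η) ∫_ξ^{ξ+η} ( w(s) − S(ξ+η−s) w(s) ) ds converge weakly to 0 as η → 0⁺. -/
open MeasureTheory Filter Set

/-- Averages of a right-continuous function tend to its value at `0`. -/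
lemma aux_avg_tendsto {g : ℝ → ℝ} (hg : ContinuousOn g (Ici 0)) :
    Tendsto (fun h : ℝ => h⁻¹ * ∫ τ in (0:ℝ)..h, g τ)
      (nhdsWithin 0 (Set.Ioi 0)) (nhds (g 0)) := by
  rw [Metric.tendsto_nhdsWithin_nhds]
  intro ε hε
  obtain ⟨δ, hδ0, hδ⟩ := Metric.tendsto_nhdsWithin_nhds.mp
    (hg 0 self_mem_Ici) (ε/2) (by positivity)
  refine ⟨δ, hδ0, ?_⟩
  intro h hh hdist
  have hh0 : (0:ℝ) < h := hh
  have hhd : h < δ := by rwa [Real.dist_eq, sub_zero, abs_of_pos hh0] at hdist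
  have hgi : IntervalIntegrable g volume 0 h :=
    (hg.mono (by rw [uIcc_of_le hh0.le]; exact Icc_subset_Ici_self)).intervalIntegrable
  have e1 : ∫ τ in (0:ℝ)..h, (g τ - g 0) = (∫ τ in (0:ℝ)..h, g τ) - h * g 0 := by
    rw [intervalIntegral.integral_sub hgi intervalIntegrable_const,
      intervalIntegral.integral_const]
    simp [smul_eq_mul]
  have e2 : ‖∫ τ in (0:ℝ)..h, (g τ - g 0)‖ ≤ (ε/2) * |h - 0| := by
    apply intervalIntegral.norm_integral_le_of_norm_le_const
    intro τ hτ
    rw [uIoc_of_le hh0.le] at hτ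
    have h2 : dist τ (0:ℝ) < δ := by
      rw [Real.dist_eq, sub_zero, abs_of_pos hτ.1]
      exact lt_of_le_of_lt hτ.2 hhd
    have h3 := hδ (le_of_lt hτ.1) h2
    rw [Real.dist_eq] at h3
    rw [Real.norm_eq_abs]
    exact h3.le
  rw [Real.dist_eq]
  have e3 : h⁻¹ * (∫ τ in (0:ℝ)..h, g τ) - g 0 = h⁻¹ * ∫ τ in (0:ℝ)..h, (g τ - g 0) := by
    rw [e1]; field_simp
  rw [e3, abs_mul, abs_inv, abs_of_pos hh0]
  rw [Real.norm_eq_abs] at e2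
  have : h⁻¹ * |∫ τ in (0:ℝ)..h, (g τ - g 0)| ≤ h⁻¹ * ((ε/2) * |h - 0|) := by
    apply mul_le_mul_of_nonneg_left e2 (by positivity)
  rw [sub_zero, abs_of_pos hh0] at this
  calc h⁻¹ * |∫ τ in (0:ℝ)..h, (g τ - g 0)| ≤ h⁻¹ * ((ε/2) * h) := this
    _ = ε/2 := by field_simp
    _ < ε := by linarith

set_option maxHeartbeats 1000000 in
/-- Let `(S(t))` be a `C₀`-semigroup on a real Hilbert space, `0 < ξ < T`,
and `w : [0,T] → E` Bochner integrable with `‖w(s)‖ ≤ M` a.e. on `[ξ,T]`.  Then for every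
`p ∈ E`, `(1/η)⟨∫_ξ^{ξ+η} (w(s) - S(ξ+η-s) w(s)) ds, p⟩ → 0` as `η → 0⁺`; i.e. the averages
`(1/η)∫_ξ^{ξ+η} (w(s) - S(ξ+η-s) w(s)) ds` converge weakly to `0`. -/
theorem averaged_semigroup_difference_weakly_null
    {E : Type*} [NormedAddCommGroup E] [InnerProductSpace ℝ E] [CompleteSpace E]
    (S : ℝ → E →L[ℝ] E)
    (hS0 : S 0 = ContinuousLinearMap.id ℝ E)
    (hSadd : ∀ s t : ℝ, 0 ≤ s → 0 ≤ t → S (t + s) = (S t).comp (S s))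
    (hScont : ∀ x : E, ContinuousOn (fun t => S t x) (Set.Ici (0:ℝ)))
    (T ξ : ℝ) (hξ : 0 < ξ) (hξT : ξ < T)
    (w : ℝ → E) (hw : IntegrableOn w (Set.Icc 0 T))
    (M : ℝ) (hM : 0 ≤ M)
    (hbound : ∀ᵐ s ∂(volume.restrict (Set.Icc ξ T)), ‖w s‖ ≤ M) :
    ∀ p : E, Tendsto (fun η : ℝ =>
        η⁻¹ * inner ℝ (∫ s in ξ..(ξ + η), (w s - S (ξ + η - s) (w s))) p)
      (nhdsWithin 0 (Set.Ioi 0)) (nhds (0:ℝ)) := by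
  classical
  -- ### A uniform bound `C` for `‖S t‖`, `t ∈ [0,2]`
  obtain ⟨C₀, hC₀⟩ : ∃ C₀ : ℝ, ∀ t : Icc (0:ℝ) 2, ‖S t‖ ≤ C₀ := by
    apply banach_steinhaus (g := fun t : Icc (0:ℝ) 2 => S t)
    intro x
    obtain ⟨c, hc⟩ := isCompact_Icc.exists_bound_of_continuousOn
      ((hScont x).mono (Icc_subset_Ici_self))
    exact ⟨c, fun t => hc t t.2⟩
  set C : ℝ := max C₀ 1 with hCdef
  have hC1 : (1:ℝ) ≤ C := le_max_right _ _
  have hC0 : (0:ℝ) ≤ C := by linarith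
  have hCS : ∀ t, t ∈ Icc (0:ℝ) 2 → ‖S t‖ ≤ C :=
    fun t ht => le_trans (hC₀ ⟨t, ht⟩) (le_max_left _ _)
  have hCx : ∀ t, t ∈ Icc (0:ℝ) 2 → ∀ x : E, ‖S t x‖ ≤ C * ‖x‖ := by
    intro t ht x
    refine le_trans ((S t).le_opNorm x) ?_
    exact mul_le_mul_of_nonneg_right (hCS t ht) (norm_nonneg x)
  -- ### clamp function
  set c : ℝ → ℝ := fun t => min (max t 0) 1 with hcdef
  have hc_mem : ∀ t, c t ∈ Icc (0:ℝ) 1 :=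
    fun t => ⟨le_min (le_max_right _ _) zero_le_one, min_le_right _ _⟩
  have hc_mem2 : ∀ t, c t ∈ Icc (0:ℝ) 2 :=
    fun t => ⟨(hc_mem t).1, le_trans (hc_mem t).2 one_le_two⟩
  have hc_eq : ∀ t, 0 ≤ t → t ≤ 1 → c t = t := by
    intro t h0 h1
    simp only [hcdef, max_eq_left h0, min_eq_left h1]
  have hc_cont : Continuous c := (continuous_id.max continuous_const).min continuous_const
  -- orbit continuity through clamp
  have horb : ∀ x : E, Continuous fun t => S (c t) x := by
    intro x
    exact (hScont x).comp_continuous hc_cont (fun t => (hc_mem t).1)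
  -- joint continuity of the clamped action
  have hjoint : Continuous fun q : ℝ × E => S (c q.1) q.2 := by
    rw [continuous_iff_continuousAt]
    intro q₀
    have h2 : Tendsto (fun q : ℝ × E => S (c q.1) (q.2 - q₀.2)) (nhds q₀) (nhds 0) := by
      apply squeeze_zero_norm (a := fun q : ℝ × E => C * ‖q.2 - q₀.2‖)
      · intro q; exact hCx _ (hc_mem2 q.1) _
      · have h3 : Tendsto (fun q : ℝ × E => C * ‖q.2 - q₀.2‖) (nhds q₀)
            (nhds (C * ‖q₀.2 - q₀.2‖)) :=
          (continuous_const.mul ((continuous_snd.sub continuous_const).norm)).tendsto q₀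
        simpa using h3
    have h3 : Tendsto (fun q : ℝ × E => S (c q.1) q₀.2) (nhds q₀)
        (nhds (S (c q₀.1) q₀.2)) := ((horb q₀.2).comp continuous_fst).tendsto q₀
    have h4 := h2.add h3
    rw [zero_add] at h4
    exact h4.congr (fun q => by rw [← map_add, sub_add_cancel])
  -- ### adjoint semigroup
  set A : ℝ → E →L[ℝ] E := fun t => ContinuousLinearMap.adjoint (S t) with hAdef
  have hA0 : A 0 = ContinuousLinearMap.id ℝ E := by
    rw [hAdef]; simp only [hS0, ContinuousLinearMap.adjoint_id]
  -- ### Submodule of "continuity vectors" of the adjoint semigroup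
  set V : Submodule ℝ E :=
    { carrier := {v | Tendsto (fun t => A t v) (nhdsWithin 0 (Set.Ioi 0)) (nhds v)}
      add_mem' := fun hu hv => by
        simp only [Set.mem_setOf_eq, map_add] at *
        exact hu.add hv
      zero_mem' := by
        simp only [Set.mem_setOf_eq, map_zero]
        exact tendsto_const_nhds
      smul_mem' := fun r v hv => by
        simp only [Set.mem_setOf_eq, _root_.map_smul] at *
        exact hv.const_smul r } with hVdef
  have hVmem : ∀ v : E, v ∈ V ↔ Tendsto (fun t => A t v) (nhdsWithin 0 (Set.Ioi 0)) (nhds v) :=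
    fun v => Iff.rfl
  set K := V.topologicalClosure with hKdef
  haveI hKc : CompleteSpace K := (Submodule.isClosed_topologicalClosure V).completeSpace_coe
  intro p
  -- ### the averaged operators `B h`
  have hBex : ∀ h : ℝ, ∃ B : E →L[ℝ] E, ∀ x, B x = ∫ τ in (0:ℝ)..(c h), S τ x := by
    intro h
    have hint : ∀ x : E, IntervalIntegrable (fun τ => S τ x) volume 0 (c h) := by
      intro x
      refine ((hScont x).mono ?_).intervalIntegrable
      rw [uIcc_of_le (hc_mem h).1]
      exact fun τ hτ => hτ.1
    refine ⟨LinearMap.mkContinuous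
      { toFun := fun x => ∫ τ in (0:ℝ)..(c h), S τ x
        map_add' := fun x y => by
          simp only [map_add]
          exact intervalIntegral.integral_add (hint x) (hint y)
        map_smul' := fun r x => by
          simp only [_root_.map_smul, RingHom.id_apply]
          exact intervalIntegral.integral_smul r _ }
      C ?_, fun x => rfl⟩
    intro x
    have hb : ‖∫ τ in (0:ℝ)..(c h), S τ x‖ ≤ (C * ‖x‖) * |c h - 0| := by
      apply intervalIntegral.norm_integral_le_of_norm_le_const
      intro τ hτ
      rw [uIoc_of_le (hc_mem h).1] at hτ
      exact hCx τ ⟨hτ.1.le, le_trans hτ.2 (le_trans (hc_mem h).2 one_le_two)⟩ x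
    refine le_trans hb ?_
    rw [sub_zero, abs_of_nonneg (hc_mem h).1]
    have h1 := (hc_mem h).2
    nlinarith [mul_nonneg hC0 (norm_nonneg x), (hc_mem h).1]
  choose B hB using hBex
  set q : ℝ → E := fun h => h⁻¹ • ContinuousLinearMap.adjoint (B h) p with hqdef
  -- interval integrability on subintervals of `[0,2]`
  have hII : ∀ (x : E) (a b : ℝ), 0 ≤ a → 0 ≤ b →
      IntervalIntegrable (fun σ => S σ x) volume a b := by
    intro x a b ha hb
    refine ((hScont x).mono ?_).intervalIntegrable
    intro σ hσ
    rcases le_total a b with hab | hab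
    · rw [uIcc_of_le hab] at hσ; exact mem_Ici.mpr (le_trans ha hσ.1)
    · rw [uIcc_of_ge hab] at hσ; exact mem_Ici.mpr (le_trans hb hσ.1)
  -- `q h` is a continuity vector for `h ∈ (0,1]`
  have hqV : ∀ h : ℝ, h ∈ Ioc (0:ℝ) 1 → q h ∈ V := by
    intro h hh
    have hch : c h = h := hc_eq h hh.1.le hh.2
    have hdiff : ∀ t : ℝ, t ∈ Ioc (0:ℝ) 1 → ‖A t (q h) - q h‖ ≤ h⁻¹ * (2 * C * ‖p‖) * t := by
      intro t ht
      have hop : ‖(B h).comp (S t) - B h‖ ≤ 2 * C * t := by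
        apply ContinuousLinearMap.opNorm_le_bound _
          (by nlinarith [ht.1.le, hC0] : (0:ℝ) ≤ 2 * C * t)
        intro x
        have hx1 : (B h) (S t x) = ∫ τ in (0:ℝ)..h, S τ (S t x) := by rw [hB, hch]
        have hx2 : (∫ τ in (0:ℝ)..h, S τ (S t x)) = ∫ τ in (0:ℝ)..h, S (τ + t) x := by
          apply intervalIntegral.integral_congr
          intro τ hτ
          rw [uIcc_of_le hh.1.le] at hτ
          show (S τ) ((S t) x) = (S (τ + t)) x
          rw [hSadd t τ ht.1.le hτ.1, ContinuousLinearMap.comp_apply]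
        have hx3 : (∫ τ in (0:ℝ)..h, S (τ + t) x) = ∫ σ in t..(t + h), S σ x := by
          have := intervalIntegral.integral_comp_add_right (a := 0) (b := h)
            (fun σ => S σ x) t
          simpa [zero_add, add_comm] using this
        have e1 : (∫ σ in (0:ℝ)..t, S σ x) + (∫ σ in t..(t+h), S σ x)
            = ∫ σ in (0:ℝ)..(t+h), S σ x :=
          intervalIntegral.integral_add_adjacent_intervals (hII x 0 t le_rfl ht.1.le)
            (hII x t (t+h) ht.1.le (by linarith [ht.1, hh.1]))
        have e2 : (∫ σ in (0:ℝ)..h, S σ x) + (∫ σ in h..(t+h), S σ x)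
            = ∫ σ in (0:ℝ)..(t+h), S σ x :=
          intervalIntegral.integral_add_adjacent_intervals (hII x 0 h le_rfl hh.1.le)
            (hII x h (t+h) hh.1.le (by linarith [ht.1, hh.1]))
        have hdiffx : ((B h).comp (S t) - B h) x
            = (∫ σ in h..(t+h), S σ x) - ∫ σ in (0:ℝ)..t, S σ x := by
          have f1 : (∫ σ in t..(t+h), S σ x)
              = (∫ σ in (0:ℝ)..(t+h), S σ x) - ∫ σ in (0:ℝ)..t, S σ x :=
            eq_sub_of_add_eq' e1
          have f2 : (∫ σ in h..(t+h), S σ x)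
              = (∫ σ in (0:ℝ)..(t+h), S σ x) - ∫ σ in (0:ℝ)..h, S σ x :=
            eq_sub_of_add_eq' e2
          simp only [ContinuousLinearMap.sub_apply, ContinuousLinearMap.comp_apply]
          rw [hx1, hx2, hx3, hB, hch, f1, f2]
          abel
        rw [hdiffx]
        have n1 : ‖∫ σ in h..(t+h), S σ x‖ ≤ (C * ‖x‖) * |(t+h) - h| := by
          apply intervalIntegral.norm_integral_le_of_norm_le_const
          intro σ hσ
          rw [uIoc_of_le (by linarith [ht.1] : h ≤ t + h)] at hσ
          exact hCx σ ⟨le_trans hh.1.le hσ.1.le, by linarith [hσ.2, ht.2, hh.2]⟩ x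
        have n2 : ‖∫ σ in (0:ℝ)..t, S σ x‖ ≤ (C * ‖x‖) * |t - 0| := by
          apply intervalIntegral.norm_integral_le_of_norm_le_const
          intro σ hσ
          rw [uIoc_of_le ht.1.le] at hσ
          exact hCx σ ⟨hσ.1.le, by linarith [hσ.2, ht.2]⟩ x
        have habs1 : |(t+h) - h| = t := by rw [abs_of_nonneg (by linarith [ht.1])]; ring
        have habs2 : |t - (0:ℝ)| = t := by rw [sub_zero, abs_of_pos ht.1]
        rw [habs1] at n1; rw [habs2] at n2
        calc ‖(∫ σ in h..(t+h), S σ x) - ∫ σ in (0:ℝ)..t, S σ x‖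
            ≤ ‖∫ σ in h..(t+h), S σ x‖ + ‖∫ σ in (0:ℝ)..t, S σ x‖ := norm_sub_le _ _
          _ ≤ (C * ‖x‖) * t + (C * ‖x‖) * t := add_le_add n1 n2
          _ = 2 * C * t * ‖x‖ := by ring
      -- translate to the adjoint
      have hAq : A t (q h) - q h
          = h⁻¹ • (ContinuousLinearMap.adjoint ((B h).comp (S t) - B h)) p := by
        simp only [hqdef, hAdef, _root_.map_smul, map_sub, ContinuousLinearMap.adjoint_comp,
          ContinuousLinearMap.sub_apply, ContinuousLinearMap.comp_apply, smul_sub]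
      rw [hAq, norm_smul, norm_inv, Real.norm_eq_abs, abs_of_pos hh.1]
      have hn : ‖(ContinuousLinearMap.adjoint ((B h).comp (S t) - B h)) p‖
          ≤ (2 * C * t) * ‖p‖ := by
        refine le_trans (ContinuousLinearMap.le_opNorm _ p) ?_
        have : ‖ContinuousLinearMap.adjoint ((B h).comp (S t) - B h)‖
            = ‖(B h).comp (S t) - B h‖ := LinearIsometryEquiv.norm_map _ _
        rw [this]
        exact mul_le_mul_of_nonneg_right hop (norm_nonneg p)
      calc h⁻¹ * ‖(ContinuousLinearMap.adjoint ((B h).comp (S t) - B h)) p‖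
          ≤ h⁻¹ * ((2 * C * t) * ‖p‖) := by
            exact mul_le_mul_of_nonneg_left hn (inv_nonneg.mpr hh.1.le)
        _ = h⁻¹ * (2 * C * ‖p‖) * t := by ring
    -- conclude membership
    rw [hVmem]
    have h0 : Tendsto (fun t => A t (q h) - q h) (nhdsWithin 0 (Set.Ioi 0)) (nhds 0) := by
      apply squeeze_zero_norm' (a := fun t : ℝ => h⁻¹ * (2 * C * ‖p‖) * t)
      · filter_upwards [Ioo_mem_nhdsGT_of_mem
          (show (0:ℝ) ∈ Ico (0:ℝ) 1 from ⟨le_refl _, one_pos⟩)] with t ht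
        exact hdiff t ⟨ht.1, ht.2.le⟩
      · have h5 : Tendsto (fun t : ℝ => h⁻¹ * (2 * C * ‖p‖) * t) (nhds 0)
            (nhds (h⁻¹ * (2 * C * ‖p‖) * 0)) :=
          (continuous_const.mul continuous_id).tendsto 0
        rw [mul_zero] at h5
        exact h5.mono_left nhdsWithin_le_nhds
    have := h0.add (tendsto_const_nhds (x := q h))
    simpa using this
  -- ### `p` lies in the closure of `V`
  have hpK : p ∈ K := by
    rw [hKdef, ← Submodule.orthogonal_orthogonal V.topologicalClosure,
      Submodule.mem_orthogonal]
    intro y hy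
    -- the function `g`
    set g : ℝ → ℝ := fun τ => (inner ℝ (S τ y) p : ℝ) with hgdef
    have hgc : ContinuousOn g (Ici 0) := by
      have h1 : Continuous fun z : E => (inner ℝ z p : ℝ) :=
        continuous_id.inner continuous_const
      exact h1.comp_continuousOn (hScont y)
    have hg0 : g 0 = (inner ℝ y p : ℝ) := by
      simp only [hgdef, hS0, ContinuousLinearMap.id_apply]
    -- identification of `⟪y, q h⟫`
    have hswapq : ∀ h : ℝ, (inner ℝ y (q h) : ℝ) = h⁻¹ * ∫ τ in (0:ℝ)..(c h), g τ := by
      intro h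
      have hi : IntervalIntegrable (fun τ => S τ y) volume 0 (c h) := hII y 0 (c h) le_rfl (hc_mem h).1
      have key : (inner ℝ (∫ τ in (0:ℝ)..(c h), S τ y) p : ℝ)
          = ∫ τ in (0:ℝ)..(c h), g τ := by
        rw [intervalIntegral.integral_of_le (hc_mem h).1,
          intervalIntegral.integral_of_le (hc_mem h).1, real_inner_comm,
          ← integral_inner ((intervalIntegrable_iff_integrableOn_Ioc_of_le (hc_mem h).1).mp hi) p]
        exact integral_congr_ae (Eventually.of_forall fun τ => real_inner_comm _ _)
      rw [hqdef]
      simp only [real_inner_smul_right]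
      rw [ContinuousLinearMap.adjoint_inner_right, hB, key]
    have ht : Tendsto (fun h => (inner ℝ y (q h) : ℝ)) (nhdsWithin 0 (Set.Ioi 0))
        (nhds (inner ℝ y p : ℝ)) := by
      have h1 := aux_avg_tendsto hgc
      rw [hg0] at h1
      apply h1.congr'
      filter_upwards [Ioo_mem_nhdsGT_of_mem
        (show (0:ℝ) ∈ Ico (0:ℝ) 1 from ⟨le_refl _, one_pos⟩)] with h hh
      rw [hswapq h, hc_eq h hh.1.le hh.2.le]
    have hzero : Tendsto (fun h => (inner ℝ y (q h) : ℝ)) (nhdsWithin 0 (Set.Ioi 0))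
        (nhds 0) := by
      apply tendsto_const_nhds.congr'
      filter_upwards [Ioo_mem_nhdsGT_of_mem
        (show (0:ℝ) ∈ Ico (0:ℝ) 1 from ⟨le_refl _, one_pos⟩)] with h hh
      have hqK : q h ∈ V.topologicalClosure :=
        V.le_topologicalClosure (hqV h ⟨hh.1, hh.2.le⟩)
      have := (Submodule.mem_orthogonal V.topologicalClosure y).mp hy (q h) hqK
      rw [real_inner_comm] at this
      exact this.symm
    exact tendsto_nhds_unique ht hzero
  have hpcl : p ∈ closure (V : Set E) := by
    rw [← Submodule.topologicalClosure_coe]; exact hpK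
  -- ### main estimate
  rw [NormedAddCommGroup.tendsto_nhds_zero]
  intro ε hε
  obtain ⟨v, hvV, hpv⟩ := Metric.mem_closure_iff.mp hpcl
    (ε / (2*((1+C)*M+1))) (by positivity)
  have hvV' : Tendsto (fun t => A t v) (nhdsWithin 0 (Set.Ioi 0)) (nhds v) := hvV
  obtain ⟨δ, hδ0, hδ⟩ := Metric.tendsto_nhdsWithin_nhds.mp hvV' (ε/(2*(M+1))) (by positivity)
  set δ' := min δ (min (T - ξ) 1) with hδ'def
  have hδ'0 : 0 < δ' := lt_min hδ0 (lt_min (by linarith) one_pos)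
  filter_upwards [Ioo_mem_nhdsGT_of_mem
    (show (0:ℝ) ∈ Ico (0:ℝ) δ' from ⟨le_refl _, hδ'0⟩)] with η hη
  obtain ⟨hη0, hηδ'⟩ := hη
  have hηδ : η < δ := lt_of_lt_of_le hηδ' (min_le_left _ _)
  have hηT : ξ + η ≤ T := by
    have h1 : η ≤ T - ξ := le_trans hηδ'.le (le_trans (min_le_right _ _) (min_le_left _ _))
    linarith
  have hη1 : η ≤ 1 := le_trans hηδ'.le (le_trans (min_le_right _ _) (min_le_right _ _))
  have hle : ξ ≤ ξ + η := by linarith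
  have hsub1 : Ioc ξ (ξ+η) ⊆ Icc 0 T :=
    fun s hs => ⟨le_of_lt (lt_trans hξ hs.1), le_trans hs.2 hηT⟩
  have hsub2 : Ioc ξ (ξ+η) ⊆ Icc ξ T := fun s hs => ⟨hs.1.le, le_trans hs.2 hηT⟩
  have hτmem : ∀ s ∈ Ioc ξ (ξ+η), 0 ≤ ξ + η - s ∧ ξ + η - s < η :=
    fun s hs => ⟨by linarith [hs.2], by linarith [hs.1]⟩
  have hwI : IntegrableOn w (Ioc ξ (ξ+η)) volume := hw.mono_set hsub1
  have hbnd : ∀ᵐ s ∂(volume.restrict (Ioc ξ (ξ+η))), ‖w s‖ ≤ M :=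
    ae_restrict_of_ae_restrict_of_subset hsub2 hbound
  have haem : ∀ᵐ s ∂(volume.restrict (Ioc ξ (ξ+η))), s ∈ Ioc ξ (ξ+η) :=
    ae_restrict_mem measurableSet_Ioc
  -- measurability & integrability of the semigroup term
  have haesm : AEStronglyMeasurable (fun s => S (ξ+η-s) (w s))
      (volume.restrict (Ioc ξ (ξ+η))) := by
    have hw' : AEStronglyMeasurable w (volume.restrict (Ioc ξ (ξ+η))) :=
      hwI.aestronglyMeasurable
    have h1 : AEStronglyMeasurable (fun s => S (c (ξ+η-s)) (w s))
        (volume.restrict (Ioc ξ (ξ+η))) :=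
      hjoint.comp_aestronglyMeasurable
        (((continuous_const.sub continuous_id).aestronglyMeasurable).prodMk hw')
    apply h1.congr
    filter_upwards [haem] with s hs
    rw [hc_eq _ (hτmem s hs).1 (le_trans (hτmem s hs).2.le hη1)]
  have hτ2 : ∀ s ∈ Ioc ξ (ξ+η), ξ + η - s ∈ Icc (0:ℝ) 2 :=
    fun s hs => ⟨(hτmem s hs).1, by linarith [(hτmem s hs).2, hη1]⟩
  have hnorm_le : ∀ᵐ s ∂(volume.restrict (Ioc ξ (ξ+η))), ‖S (ξ+η-s) (w s)‖ ≤ C * ‖w s‖ := by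
    filter_upwards [haem] with s hs
    exact hCx _ (hτ2 s hs) _
  have hSI : IntegrableOn (fun s => S (ξ+η-s) (w s)) (Ioc ξ (ξ+η)) volume :=
    Integrable.mono' (hwI.norm.const_mul C) haesm hnorm_le
  have hfI : IntegrableOn (fun s => w s - S (ξ+η-s) (w s)) (Ioc ξ (ξ+η)) volume :=
    hwI.sub hSI
  have hJ : (∫ s in ξ..(ξ+η), (w s - S (ξ+η-s) (w s)))
      = ∫ s in Ioc ξ (ξ+η), (w s - S (ξ+η-s) (w s)) :=
    intervalIntegral.integral_of_le hle
  have hswap : ∀ x : E, (inner ℝ (∫ s in Ioc ξ (ξ+η), (w s - S (ξ+η-s) (w s))) x : ℝ)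
      = ∫ s in Ioc ξ (ξ+η), (inner ℝ (w s - S (ξ+η-s) (w s)) x : ℝ) := by
    intro x
    rw [real_inner_comm, ← integral_inner hfI x]
    exact integral_congr_ae (Eventually.of_forall fun s => real_inner_comm _ _)
  have hvol : (volume (Ioc ξ (ξ+η))).toReal = η := by
    have h1 : ξ + η - ξ = η := by ring
    rw [Real.volume_Ioc, h1, ENNReal.toReal_ofReal hη0.le]
  have hvolfin : volume (Ioc ξ (ξ+η)) < ⊤ := by
    rw [Real.volume_Ioc]; exact ENNReal.ofReal_lt_top
  -- bound 1 : pairing against `v`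
  have hb1 : |∫ s in Ioc ξ (ξ+η), (inner ℝ (w s - S (ξ+η-s) (w s)) v : ℝ)|
      ≤ (M * (ε/(2*(M+1)))) * η := by
    have key : ‖∫ s in Ioc ξ (ξ+η), (inner ℝ (w s - S (ξ+η-s) (w s)) v : ℝ)‖
        ≤ (M * (ε/(2*(M+1)))) * (volume (Ioc ξ (ξ+η))).toReal := by
      apply norm_setIntegral_le_of_norm_le_const_ae hvolfin
      filter_upwards [hbnd, haem] with s hsM hs
      have hτm := hτmem s hs
      have hAv : ‖v - A (ξ+η-s) v‖ ≤ ε/(2*(M+1)) := by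
        rcases eq_or_lt_of_le hτm.1 with h0 | h0
        · rw [← h0, hA0]
          simp only [ContinuousLinearMap.id_apply, sub_self, norm_zero]
          positivity
        · have h2 := hδ (mem_Ioi.mpr h0)
            (by rw [Real.dist_eq, sub_zero, abs_of_pos h0]; linarith [hτm.2])
          rw [dist_eq_norm] at h2
          rw [norm_sub_rev]
          exact h2.le
      have heq : (inner ℝ (w s - S (ξ+η-s) (w s)) v : ℝ)
          = inner ℝ (w s) (v - A (ξ+η-s) v) := by
        rw [inner_sub_left, inner_sub_right, hAdef, ContinuousLinearMap.adjoint_inner_right]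
      rw [Real.norm_eq_abs, heq]
      calc |(inner ℝ (w s) (v - A (ξ+η-s) v) : ℝ)|
          ≤ ‖w s‖ * ‖v - A (ξ+η-s) v‖ := abs_real_inner_le_norm _ _
        _ ≤ M * (ε/(2*(M+1))) := mul_le_mul hsM hAv (norm_nonneg _) hM
    rw [Real.norm_eq_abs, hvol] at key
    exact key
  -- bound 2 : norm of the integral
  have hb2 : ‖∫ s in Ioc ξ (ξ+η), (w s - S (ξ+η-s) (w s))‖ ≤ ((1+C)*M) * η := by
    have key : ‖∫ s in Ioc ξ (ξ+η), (w s - S (ξ+η-s) (w s))‖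
        ≤ ((1+C)*M) * (volume (Ioc ξ (ξ+η))).toReal := by
      apply norm_setIntegral_le_of_norm_le_const_ae hvolfin
      filter_upwards [hbnd, hnorm_le] with s h1 h2
      calc ‖w s - S (ξ+η-s) (w s)‖ ≤ ‖w s‖ + ‖S (ξ+η-s) (w s)‖ := norm_sub_le _ _
        _ ≤ M + C * M := add_le_add h1 (le_trans h2 (mul_le_mul_of_nonneg_left h1 hC0))
        _ = (1+C)*M := by ring
    rw [hvol] at key
    exact key
  -- combine
  rw [Real.norm_eq_abs]
  have hsplit : (inner ℝ (∫ s in ξ..(ξ+η), (w s - S (ξ+η-s) (w s))) p : ℝ)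
      = (∫ s in Ioc ξ (ξ+η), (inner ℝ (w s - S (ξ+η-s) (w s)) v : ℝ))
        + inner ℝ (∫ s in Ioc ξ (ξ+η), (w s - S (ξ+η-s) (w s))) (p - v) := by
    rw [hJ, ← hswap v, ← inner_add_right]
    congr 1
    abel
  set d : ℝ := ‖p - v‖ with hddef
  have hd0 : 0 ≤ d := norm_nonneg _
  have hdlt : d < ε / (2*((1+C)*M+1)) := by
    rw [hddef, ← dist_eq_norm]; exact hpv
  have hbound2 : |(inner ℝ (∫ s in Ioc ξ (ξ+η), (w s - S (ξ+η-s) (w s))) (p - v) : ℝ)|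
      ≤ ((1+C)*M) * η * d := by
    calc |(inner ℝ (∫ s in Ioc ξ (ξ+η), (w s - S (ξ+η-s) (w s))) (p - v) : ℝ)|
        ≤ ‖∫ s in Ioc ξ (ξ+η), (w s - S (ξ+η-s) (w s))‖ * d := abs_real_inner_le_norm _ _
      _ ≤ ((1+C)*M) * η * d := mul_le_mul_of_nonneg_right hb2 hd0
  have htotal : |(inner ℝ (∫ s in ξ..(ξ+η), (w s - S (ξ+η-s) (w s))) p : ℝ)|
      ≤ (M * (ε/(2*(M+1)))) * η + ((1+C)*M) * η * d := by
    rw [hsplit]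
    exact le_trans (abs_add_le _ _) (add_le_add hb1 hbound2)
  have hmain : |η⁻¹ * (inner ℝ (∫ s in ξ..(ξ+η), (w s - S (ξ+η-s) (w s))) p : ℝ)|
      ≤ M * (ε/(2*(M+1))) + ((1+C)*M) * d := by
    rw [abs_mul, abs_inv, abs_of_pos hη0]
    have h1 : η⁻¹ * |(inner ℝ (∫ s in ξ..(ξ+η), (w s - S (ξ+η-s) (w s))) p : ℝ)|
        ≤ η⁻¹ * ((M * (ε/(2*(M+1)))) * η + ((1+C)*M) * η * d) :=
      mul_le_mul_of_nonneg_left htotal (by positivity)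
    have h2 : η⁻¹ * ((M * (ε/(2*(M+1)))) * η + ((1+C)*M) * η * d)
        = M * (ε/(2*(M+1))) + ((1+C)*M) * d := by
      field_simp
    rw [h2] at h1
    exact h1
  have harith1 : M * (ε/(2*(M+1))) < ε/2 := by
    have hu : 0 < ε/(2*(M+1)) := by positivity
    have heq : (M+1) * (ε/(2*(M+1))) = ε/2 := by field_simp
    nlinarith
  have harith2 : ((1+C)*M) * d < ε/2 := by
    have hb0' : (0:ℝ) ≤ (1+C)*M := by positivity
    have he' : 0 < ε/(2*((1+C)*M+1)) := by positivity
    have h2 : ((1+C)*M)*d ≤ ((1+C)*M)*(ε/(2*((1+C)*M+1))) :=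
      mul_le_mul_of_nonneg_left hdlt.le hb0'
    have h3 : (((1+C)*M)+1) * (ε/(2*((1+C)*M+1))) = ε/2 := by field_simp
    nlinarith
  calc |η⁻¹ * (inner ℝ (∫ s in ξ..(ξ+η), (w s - S (ξ+η-s) (w s))) p : ℝ)|
      ≤ M * (ε/(2*(M+1))) + ((1+C)*M) * d := hmain
    _ < ε/2 + ε/2 := add_lt_add harith1 harith2
    _ = ε := by ring
end

section
/- Let Ω ⊆ ℝ^M be a nonempty bounded open set with Lebesgue measure, K ⊆ ℝ^N a nonempty closed convex set, and φ : [0,1] × Ω × K → (nonempty subsets of ℝ^N) an upper semicontinuous set-valued map with convex compact values such that there exist α ∈ L²(Ω, ℝ) and c > 0 with |v| ≤ α(x) + c|y| for every t ∈ [0,1], x ∈ Ω, y ∈ K and v ∈ φ(t,x,y). Let 𝓚 := {u ∈ L²(Ω, ℝ^N) : u(x) ∈ K for a.e. x ∈ Ω} and define the Nemytskii operator F(t,u) := {v ∈ L²(Ω, ℝ^N) : v(x) ∈ φ(t, x, u(x)) for a.e. x ∈ Ω}. Then F is Hausdorff upper semicontinuous with respect to both variables: for every t₀ ∈ [0,1],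 u₀ ∈ 𝓚 and ε > 0 there exists δ > 0 such that whenever t ∈ [0,1], u ∈ 𝓚, |t − t₀| < δ and ‖u − u₀‖_{L²} < δ, every v ∈ F(t,u) satisfies ‖v − v'‖_{L²} < ε for some v' ∈ F(t₀,u₀). -/
/-!
Suppose the claim fails along `(tₙ, uₙ, vₙ)` with `|tₙ - t₀|, ‖uₙ - u₀‖ < 2⁻ⁿ` and
`vₙ ∈ F(tₙ, uₙ)` at distance `≥ ε` from `F(t₀, u₀)`. The fast rate makes `uₙ → u₀` a.e. with
`∑ |uₙ - u₀| ∈ L²`, so the growth bound dominates everything by one `L²` function. Let `v'ₙ(x)` be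
the nearest point to `vₙ(x)` in the closed convex set `φ(t₀, x, u₀ x)`. It is measurable: upper
semicontinuity of `φ` makes `(z, x) ↦ dist(z, φ(t₀, x, u₀ x))` lower semicontinuous, and by the
parallelogram law measurable approximate minimizers form a Cauchy sequence. Upper semicontinuity
also gives `|vₙ - v'ₙ|(x) = dist(vₙ x, φ(t₀, x, u₀ x)) → 0` a.e., so by dominated convergence
`‖vₙ - v'ₙ‖ → 0`, a contradiction.
-/

open MeasureTheory Metric Set
open Filter Topology
open scoped ENNReal

section NearestPoint

variable {E : Type*} [NormedAddCommGroup E] [InnerProductSpace ℝ E] {C : Set E}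

theorem dist_sq_le_of_mem_convex (hC : Convex ℝ C) (a : E) {y y' : E} (hy : y ∈ C)
    (hy' : y' ∈ C) :
    dist y y' ^ 2 ≤
      2 * (dist a y ^ 2 - infDist a C ^ 2) + 2 * (dist a y' ^ 2 - infDist a C ^ 2) := by
  set m := (1 / 2 : ℝ) • y + (1 / 2 : ℝ) • y'
  have hm : infDist a C ≤ ‖a - m‖ := by
    rw [← dist_eq_norm]
    exact infDist_le_dist_of_mem (hC hy hy' (by norm_num) (by norm_num) (by norm_num))
  have law := parallelogram_law_with_norm ℝ (a - y) (a - y')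
  rw [show a - y + (a - y') = (2 : ℝ) • (a - m) by module, show a - y - (a - y') = y' - y by abel,
    norm_smul, Real.norm_two] at law
  rw [dist_eq_norm, dist_eq_norm, dist_eq_norm, norm_sub_rev y]
  nlinarith [infDist_nonneg (x := a) (s := C)]

theorem cauchySeq_of_tendsto_dist_infDist (hC : Convex ℝ C) {a : E} {y : ℕ → E}
    (hy : ∀ n, y n ∈ C) (h : Tendsto (fun n => dist a (y n)) atTop (𝓝 (infDist a C))) :
    CauchySeq y := by
  have he : Tendsto (fun n => dist a (y n) ^ 2 - infDist a C ^ 2) atTop (𝓝 0) := by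
    convert (h.pow 2).sub_const (infDist a C ^ 2) using 2
    ring
  rw [Metric.cauchySeq_iff']
  intro ε hε
  obtain ⟨N, hN⟩ := eventually_atTop.1 (he.eventually (eventually_lt_nhds
    (by positivity : (0 : ℝ) < ε ^ 2 / 4)))
  refine ⟨N, fun n hn => lt_of_pow_lt_pow_left₀ 2 hε.le ?_⟩
  linarith [dist_sq_le_of_mem_convex hC a (hy n) (hy N), hN n hn, hN N le_rfl]

theorem exists_tendsto_mem_of_tendsto_infDist [CompleteSpace E] (hC : Convex ℝ C)
    (hCc : IsClosed C) (hne : C.Nonempty) {a : E} {w : ℕ → E}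
    (h₁ : Tendsto (fun n => infDist (w n) C) atTop (𝓝 0))
    (h₂ : Tendsto (fun n => dist a (w n)) atTop (𝓝 (infDist a C))) :
    ∃ g ∈ C, Tendsto w atTop (𝓝 g) := by
  have hr : Tendsto (fun n : ℕ => 1 / ((n : ℝ) + 1)) atTop (𝓝 0) :=
    tendsto_one_div_add_atTop_nhds_zero_nat
  choose y hyC hy using fun n : ℕ => (infDist_lt_iff hne).1
    (lt_add_of_pos_right (infDist (w n) C) (by positivity : (0 : ℝ) < 1 / ((n : ℝ) + 1)))
  have hwy : Tendsto (fun n => dist (w n) (y n)) atTop (𝓝 0) :=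
    squeeze_zero (fun n => dist_nonneg) (fun n => (hy n).le) (by simpa using h₁.add hr)
  have hay : Tendsto (fun n => dist a (y n)) atTop (𝓝 (infDist a C)) :=
    h₂.congr_dist (squeeze_zero (fun n => dist_nonneg)
      (fun n => dist_dist_dist_le_right a (w n) (y n)) hwy)
  obtain ⟨g, hg⟩ := cauchySeq_tendsto_of_complete (cauchySeq_of_tendsto_dist_infDist hC hyC hay)
  exact ⟨g, hCc.mem_of_tendsto hg (Eventually.of_forall hyC),
    hg.congr_dist (by simpa only [dist_comm] using hwy)⟩

theorem exists_measurable_selection_dist_eq_infDist {X : Type*} [MeasurableSpace X]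
    [CompleteSpace E] [TopologicalSpace.SeparableSpace E] [MeasurableSpace E] [BorelSpace E]
    {Ψ : X → Set E} (hne : ∀ x, (Ψ x).Nonempty) (hcl : ∀ x, IsClosed (Ψ x))
    (hconv : ∀ x, Convex ℝ (Ψ x))
    (hmeas : ∀ f : X → E, Measurable f → Measurable fun x => infDist (f x) (Ψ x))
    {f : X → E} (hf : Measurable f) :
    ∃ g : X → E, Measurable g ∧ ∀ x, g x ∈ Ψ x ∧ dist (f x) (g x) = infDist (f x) (Ψ x) := by
  classical
  obtain ⟨z, hz⟩ := TopologicalSpace.exists_dense_seq E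
  set r : ℕ → ℝ := fun m => 1 / ((m : ℝ) + 1)
  have hr : Tendsto r atTop (𝓝 0) := tendsto_one_div_add_atTop_nhds_zero_nat
  -- `w m x` is the first `z j` that is `r m`-close to `Ψ x` and `r m`-almost minimizes the
  -- distance to `f x`; taking the first index keeps `w m` measurable.
  set Q : ℕ → X → ℕ → Prop := fun m x j =>
    infDist (z j) (Ψ x) < r m ∧ dist (f x) (z j) < infDist (f x) (Ψ x) + r m
  have hQ : ∀ m x, ∃ j, Q m x j := by
    intro m x
    have hrm : 0 < r m := by positivity
    obtain ⟨y, hy, hfy⟩ := (infDist_lt_iff (hne x)).1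
      (lt_add_of_pos_right (infDist (f x) (Ψ x)) (half_pos hrm))
    obtain ⟨j, hj⟩ := hz.exists_dist_lt y (half_pos hrm)
    refine ⟨j, (infDist_le_dist_of_mem hy).trans_lt ?_, ?_⟩
    · rw [dist_comm]; linarith
    · linarith [dist_triangle (f x) y (z j)]
  have hQm : ∀ m j, MeasurableSet {x | Q m x j} := fun m j =>
    (measurableSet_lt (hmeas _ measurable_const) measurable_const).inter
      (measurableSet_lt (hf.dist measurable_const) ((hmeas f hf).add_const _))
  set w : ℕ → X → E := fun m x => z (Nat.find (hQ m x))
  have hwQ : ∀ m x, Q m x (Nat.find (hQ m x)) := fun m x => Nat.find_spec (hQ m x)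
  have hdist : ∀ x, Tendsto (fun m => dist (f x) (w m x)) atTop (𝓝 (infDist (f x) (Ψ x))) := by
    intro x
    refine tendsto_of_tendsto_of_tendsto_of_le_of_le (by simpa using tendsto_const_nhds.sub hr)
      (by simpa using tendsto_const_nhds.add hr) (fun m => ?_) (fun m => (hwQ m x).2.le)
    linarith [infDist_le_infDist_add_dist (x := f x) (y := w m x) (s := Ψ x), (hwQ m x).1]
  choose g hgΨ hg using fun x => exists_tendsto_mem_of_tendsto_infDist (hconv x) (hcl x) (hne x)
    (squeeze_zero (fun m => infDist_nonneg) (fun m => (hwQ m x).1.le) hr) (hdist x)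
  refine ⟨g, measurable_of_tendsto_metrizable
    (fun m => measurable_from_top.comp (measurable_find _ (hQm m))) (tendsto_pi_nhds.2 hg),
    fun x => ⟨hgΨ x, tendsto_nhds_unique (tendsto_const_nhds.dist (hg x)) (hdist x)⟩⟩

end NearestPoint

section SetValued

variable {T E : Type*} [PseudoMetricSpace E]

theorem lowerSemicontinuous_infDist_of_eventually_subset_thickening [TopologicalSpace T]
    {Φ : T → Set E} (hne : ∀ q, (Φ q).Nonempty)
    (husc : ∀ q₀, ∀ ε > 0, ∀ᶠ q in 𝓝 q₀, Φ q ⊆ thickening ε (Φ q₀)) :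
    LowerSemicontinuous fun zq : E × T => infDist zq.1 (Φ zq.2) := by
  rintro ⟨z₀, q₀⟩ lam hlam
  set ε := (infDist z₀ (Φ q₀) - lam) / 2
  have hε : 0 < ε := by simp only [ε] at hlam ⊢; linarith
  rw [nhds_prod_eq]
  filter_upwards [prod_mem_prod (ball_mem_nhds z₀ hε) (husc q₀ ε hε)] with ⟨z, q⟩ ⟨hz, hq⟩
  have key : infDist z₀ (Φ q₀) - dist z z₀ - ε ≤ infDist z (Φ q) := by
    refine (le_infDist (hne q)).2 fun y hy => ?_
    obtain ⟨y₀, hy₀, hyy₀⟩ := mem_thickening_iff.1 (hq hy)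
    linarith [infDist_le_dist_of_mem (x := z₀) hy₀, dist_triangle4 z₀ z y y₀, dist_comm z z₀]
  rw [mem_ball] at hz
  simp only [ε] at hz key ⊢
  linarith

theorem tendsto_infDist_of_eventually_subset_thickening {ι : Type*} {Φ : T → Set E}
    {L : Filter T} {S : Set E} (hS : S.Nonempty)
    (husc : ∀ ε > 0, ∀ᶠ q in L, Φ q ⊆ thickening ε S) {l : Filter ι} {q : ι → T}
    (hq : Tendsto q l L) {v : ι → E} (hv : ∀ᶠ i in l, v i ∈ Φ (q i)) :
    Tendsto (fun i => infDist (v i) S) l (𝓝 0) := by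
  refine Metric.tendsto_nhds.2 fun ε hε => ?_
  filter_upwards [hq.eventually (husc ε hε), hv] with i hsub hvi
  rw [Real.dist_0_eq_abs, abs_of_nonneg infDist_nonneg]
  exact (mem_thickening_iff_infDist_lt hS).1 (hsub hvi)

end SetValued

theorem exists_measurable_subtype_ae_eq {X P : Type*} [MeasurableSpace X] [MeasurableSpace P]
    {μ : Measure X} {D : Set P} (hD : MeasurableSet D)
    (hDne : D.Nonempty) {ρ : X → P} (hρ : Measurable ρ) (hρD : ∀ᵐ x ∂μ, ρ x ∈ D) :
    ∃ σ : X → D, Measurable σ ∧ ∀ᵐ x ∂μ, (σ x : P) = ρ x := by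
  classical
  obtain ⟨q₁, hq₁⟩ := hDne
  have hmem : ∀ x, (ρ ⁻¹' D).piecewise ρ (fun _ => q₁) x ∈ D := fun x => by
    by_cases h : ρ x ∈ D <;> simp [h, hq₁]
  refine ⟨fun x => ⟨_, hmem x⟩,
    (Measurable.piecewise (hD.preimage hρ) hρ measurable_const).subtype_mk, ?_⟩
  filter_upwards [hρD] with x hx
  simp [hx]

section Lp

variable {X E : Type*} [MeasurableSpace X] {μ : Measure X} [NormedAddCommGroup E]
  {p : ℝ≥0∞}

theorem Lp.exists_memLp_hasSum_norm [Fact (1 ≤ p)] {f : ℕ → Lp E p μ}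
    (hf : Summable fun n => ‖f n‖) :
    ∃ G : X → ℝ, MemLp G p μ ∧ ∀ᵐ x ∂μ, HasSum (fun n => ‖f n x‖) (G x) := by
  set g : ℕ → Lp ℝ p μ := fun n => (Lp.memLp (f n)).norm.toLp _
  have hg : ∀ᵐ x ∂μ, ∀ n, g n x = ‖f n x‖ := ae_all_iff.2 fun n => (Lp.memLp (f n)).norm.coeFn_toLp
  have hgf : ∀ n, ‖g n‖ = ‖f n‖ := fun n => by
    rw [Lp.norm_toLp, eLpNorm_norm, Lp.norm_def]
  have hsum : ∑' n, ‖g n‖ₑ ≠ ∞ := by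
    simp only [enorm_eq_nnnorm]
    exact ENNReal.tsum_coe_ne_top_iff_summable.2 (by
      rw [← NNReal.summable_coe]; simpa [hgf] using hf)
  refine ⟨⇑(∑' n, g n), Lp.memLp _, ?_⟩
  filter_upwards [Lp.hasSum_coeFn_tsum hsum, hg] with x hx hgx
  simpa only [hgx] using hx

theorem Lp.ae_tendsto_of_summable_norm_sub [Fact (1 ≤ p)] {u : ℕ → Lp E p μ} {u₀ : Lp E p μ}
    (hsum : Summable fun n => ‖u n - u₀‖) :
    ∀ᵐ x ∂μ, Tendsto (fun n => u n x) atTop (𝓝 (u₀ x)) := by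
  obtain ⟨G, -, hG⟩ := Lp.exists_memLp_hasSum_norm hsum
  filter_upwards [hG, ae_all_iff.2 fun n => Lp.coeFn_sub (u n) u₀] with x hx hsub
  rw [tendsto_iff_norm_sub_tendsto_zero]
  simpa only [hsub, Pi.sub_apply] using hx.summable.tendsto_atTop_zero

theorem tendsto_eLpNorm_of_dominated (hp0 : p ≠ 0) (hp : p ≠ ∞) {F : ℕ → X → E} {B : X → ℝ}
    (hF : ∀ n, AEStronglyMeasurable (F n) μ) (hB : MemLp B p μ)
    (hbound : ∀ n, ∀ᵐ x ∂μ, ‖F n x‖ ≤ B x)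
    (hlim : ∀ᵐ x ∂μ, Tendsto (fun n => F n x) atTop (𝓝 0)) :
    Tendsto (fun n => eLpNorm (F n) p μ) atTop (𝓝 0) := by
  have hr : 0 < p.toReal := ENNReal.toReal_pos hp0 hp
  have hint : Tendsto (fun n => ∫⁻ x, ‖F n x‖ₑ ^ p.toReal ∂μ) atTop (𝓝 0) := by
    have := tendsto_lintegral_of_dominated_convergence' (f := fun _ => 0)
      (fun x => ‖B x‖ₑ ^ p.toReal) (fun n => (hF n).enorm.pow_const p.toReal)
      (fun n => (hbound n).mono fun x hx =>
        ENNReal.rpow_le_rpow (enorm_le_iff_norm_le.2 (hx.trans (Real.le_norm_self _))) hr.le)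
      (lintegral_rpow_enorm_lt_top_of_eLpNorm_lt_top hp0 hp hB.2).ne
      (hlim.mono fun x hx => by
        simpa [Function.comp_def, ENNReal.zero_rpow_of_pos hr] using
          ((ENNReal.continuous_rpow_const (y := p.toReal)).tendsto 0).comp
            (by simpa using hx.enorm))
    simpa using this
  have := ((ENNReal.continuous_rpow_const (y := 1 / p.toReal)).tendsto 0).comp hint
  simp only [eLpNorm_eq_lintegral_rpow_enorm_toReal hp0 hp]
  simpa [Function.comp_def, hr] using this

end Lp

section Selection

variable {X P E : Type*} [MeasurableSpace X] {μ : Measure X}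
  [TopologicalSpace P] [MeasurableSpace P] [OpensMeasurableSpace P]
  [NormedAddCommGroup E] [InnerProductSpace ℝ E] [CompleteSpace E] [SecondCountableTopology E]
  [MeasurableSpace E] [BorelSpace E] {p : ℝ≥0∞} [Fact (1 ≤ p)]

theorem exists_measurable_selection_dist_eq_infDist_ae {D : Set P} (hD : MeasurableSet D)
    (hDne : D.Nonempty) {Φ : P → Set E} (hne : ∀ q ∈ D, (Φ q).Nonempty) (hcl : ∀ q ∈ D, IsClosed (Φ q))
    (hconv : ∀ q ∈ D, Convex ℝ (Φ q))
    (husc : ∀ q₀ ∈ D, ∀ ε > 0, ∀ᶠ q in 𝓝[D] q₀, Φ q ⊆ thickening ε (Φ q₀))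
    {ρ : X → P} (hρ : Measurable ρ) (hρD : ∀ᵐ x ∂μ, ρ x ∈ D) {f : X → E} (hf : Measurable f) :
    ∃ g : X → E, Measurable g ∧
      ∀ᵐ x ∂μ, g x ∈ Φ (ρ x) ∧ dist (f x) (g x) = infDist (f x) (Φ (ρ x)) := by
  obtain ⟨σ, hσ, hσρ⟩ := exists_measurable_subtype_ae_eq hD hDne hρ hρD
  have hdist : Measurable fun zq : E × D => infDist zq.1 (Φ zq.2) :=
    (lowerSemicontinuous_infDist_of_eventually_subset_thickening (Φ := fun q : D => Φ q)
      (fun q => hne q q.2)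
      fun q₀ ε hε => (eventually_nhds_subtype_iff D q₀ _).2 (husc q₀ q₀.2 ε hε)).measurable
  obtain ⟨g, hgm, hg⟩ := exists_measurable_selection_dist_eq_infDist
    (Ψ := fun x => Φ (σ x)) (fun x => hne _ (σ x).2) (fun x => hcl _ (σ x).2)
    (fun x => hconv _ (σ x).2)
    (fun f' hf' => hdist.comp (f := fun x => (f' x, σ x)) (hf'.prodMk hσ)) hf
  refine ⟨g, hgm, ?_⟩
  filter_upwards [hσρ] with x hx
  simpa only [hx] using hg x

theorem exists_selection_tendsto_norm_sub {D : Set P} (hD : MeasurableSet D) (hDne : D.Nonempty)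
    {Φ : P → Set E} (hne : ∀ q ∈ D, (Φ q).Nonempty) (hcl : ∀ q ∈ D, IsClosed (Φ q))
    (hconv : ∀ q ∈ D, Convex ℝ (Φ q))
    (husc : ∀ q₀ ∈ D, ∀ ε > 0, ∀ᶠ q in 𝓝[D] q₀, Φ q ⊆ thickening ε (Φ q₀))
    (hp : p ≠ ∞) {ρ : ℕ → X → P} {ρ₀ : X → P} (hρ₀ : Measurable ρ₀) (hρ₀D : ∀ᵐ x ∂μ, ρ₀ x ∈ D)
    (hρ : ∀ᵐ x ∂μ, Tendsto (fun n => ρ n x) atTop (𝓝[D] (ρ₀ x)))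
    {B : X → ℝ} (hB : MemLp B p μ)
    (hbound : ∀ᵐ x ∂μ, (∀ n, ∀ w ∈ Φ (ρ n x), ‖w‖ ≤ B x) ∧ ∀ w ∈ Φ (ρ₀ x), ‖w‖ ≤ B x)
    {v : ℕ → Lp E p μ} (hv : ∀ n, ∀ᵐ x ∂μ, v n x ∈ Φ (ρ n x)) :
    ∃ v' : ℕ → Lp E p μ, (∀ n, ∀ᵐ x ∂μ, v' n x ∈ Φ (ρ₀ x)) ∧
      Tendsto (fun n => ‖v n - v' n‖) atTop (𝓝 0) := by
  have hsel : ∀ n, ∃ v' : Lp E p μ, (∀ᵐ x ∂μ, v' x ∈ Φ (ρ₀ x)) ∧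
      ∀ᵐ x ∂μ, ‖v n x - v' x‖ = infDist (v n x) (Φ (ρ₀ x)) := by
    intro n
    obtain ⟨g, hgm, hg⟩ := exists_measurable_selection_dist_eq_infDist_ae hD hDne hne hcl hconv
      husc hρ₀ hρ₀D (Lp.stronglyMeasurable (v n)).measurable
    have hgLp : MemLp g p μ := hB.of_le hgm.aestronglyMeasurable <| by
      filter_upwards [hg, hbound] with x hgx hBx
      exact (hBx.2 _ hgx.1).trans (Real.le_norm_self _)
    refine ⟨hgLp.toLp g, ?_, ?_⟩ <;> filter_upwards [hgLp.coeFn_toLp, hg] with x hx hgx <;>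
      rw [hx]
    · exact hgx.1
    · rw [← dist_eq_norm]; exact hgx.2
  choose v' hv'Φ hv'd using hsel
  refine ⟨v', hv'Φ, ?_⟩
  have hdiff : ∀ᵐ x ∂μ, ∀ n, (v n - v' n) x = v n x - v' n x :=
    ae_all_iff.2 fun n => Lp.coeFn_sub (v n) (v' n)
  have hlim : Tendsto (fun n => eLpNorm (v n - v' n) p μ) atTop (𝓝 0) := by
    refine tendsto_eLpNorm_of_dominated (zero_lt_one.trans_le (Fact.out : 1 ≤ p)).ne' hp
      (B := fun x => 2 * B x) (fun n => Lp.aestronglyMeasurable _) (hB.const_mul 2)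
      (fun n => ?_) ?_
    · filter_upwards [hdiff, hbound, hv n, hv'Φ n] with x hx hBx hvx hv'x
      rw [hx n]
      linarith [norm_sub_le (v n x) (v' n x), hBx.1 n _ hvx, hBx.2 _ hv'x]
    · filter_upwards [hdiff, hρ, hρ₀D, ae_all_iff.2 hv, ae_all_iff.2 hv'd]
        with x hx hρx hρ₀x hvx hv'x
      rw [tendsto_zero_iff_norm_tendsto_zero]
      simp only [hx, hv'x]
      exact tendsto_infDist_of_eventually_subset_thickening (hne _ hρ₀x) (husc _ hρ₀x) hρx
        (Eventually.of_forall hvx)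
  simpa only [Function.comp_def, Lp.norm_def, ENNReal.toReal_zero] using
    (ENNReal.tendsto_toReal ENNReal.zero_ne_top).comp hlim

end Selection

theorem eventually_nhdsWithin_subset_thickening {X E : Type*} [SeminormedAddCommGroup X]
    [SeminormedAddCommGroup E] {T : Set ℝ} {Ω : Set X} {K : Set E} {φ : ℝ → X → E → Set E}
    (hφusc : ∀ t₀ ∈ T, ∀ x₀ ∈ Ω, ∀ y₀ ∈ K, ∀ V : Set E, IsOpen V → φ t₀ x₀ y₀ ⊆ V →
      ∃ δ > (0:ℝ), ∀ t ∈ T, ∀ x ∈ Ω, ∀ y ∈ K,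
        |t - t₀| < δ → ‖x - x₀‖ < δ → ‖y - y₀‖ < δ → φ t x y ⊆ V) :
    ∀ q₀ ∈ T ×ˢ Ω ×ˢ K, ∀ ε > 0, ∀ᶠ q in 𝓝[T ×ˢ Ω ×ˢ K] q₀,
      φ q.1 q.2.1 q.2.2 ⊆ thickening ε (φ q₀.1 q₀.2.1 q₀.2.2) := by
  rintro ⟨t₀, x₀, y₀⟩ ⟨ht₀, hx₀, hy₀⟩ ε hε
  obtain ⟨δ, hδ, h⟩ := hφusc t₀ ht₀ x₀ hx₀ y₀ hy₀ _ isOpen_thickening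
    (self_subset_thickening hε _)
  refine Metric.mem_nhdsWithin_iff.2 ⟨δ, hδ, ?_⟩
  rintro ⟨t, x, y⟩ ⟨hq, ht, hx, hy⟩
  rw [mem_ball, Prod.dist_eq, Prod.dist_eq, max_lt_iff, max_lt_iff, Real.dist_eq, dist_eq_norm,
    dist_eq_norm] at hq
  exact h t ht x hx y hy hq.1 hq.2.1 hq.2.2

theorem exists_memLp_bound_of_growth {X E : Type*} [MeasurableSpace X] {μ : Measure X}
    [NormedAddCommGroup E] {p : ℝ≥0∞} [Fact (1 ≤ p)] {T : Set ℝ} {Ω : Set X} {K : Set E}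
    {φ : ℝ → X → E → Set E} {α : X → ℝ} {c : ℝ}
    (hgrowth : ∀ t ∈ T, ∀ x ∈ Ω, ∀ y ∈ K, ∀ v ∈ φ t x y, ‖v‖ ≤ α x + c * ‖y‖)
    (hα : MemLp α p μ) (hc : 0 ≤ c) (hΩ : ∀ᵐ x ∂μ, x ∈ Ω)
    {t : ℕ → ℝ} (ht : ∀ n, t n ∈ T) {t₀ : ℝ} (ht₀ : t₀ ∈ T)
    {u : ℕ → Lp E p μ} {u₀ : Lp E p μ} (hu : ∀ n, ∀ᵐ x ∂μ, u n x ∈ K)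
    (hu₀ : ∀ᵐ x ∂μ, u₀ x ∈ K) (hsum : Summable fun n => ‖u n - u₀‖) :
    ∃ B : X → ℝ, MemLp B p μ ∧ ∀ᵐ x ∂μ,
      (∀ n, ∀ w ∈ φ (t n) x (u n x), ‖w‖ ≤ B x) ∧ ∀ w ∈ φ t₀ x (u₀ x), ‖w‖ ≤ B x := by
  obtain ⟨G, hG, hGsum⟩ := Lp.exists_memLp_hasSum_norm hsum
  refine ⟨fun x => ‖α x‖ + c * (‖u₀ x‖ + G x),
    hα.norm.add (((Lp.memLp u₀).norm.add hG).const_mul c), ?_⟩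
  filter_upwards [hΩ, ae_all_iff.2 hu, hu₀, hGsum, ae_all_iff.2 fun n => Lp.coeFn_sub (u n) u₀]
    with x hx hux hu₀x hGx hsub
  have hle : ∀ n, ‖u n x‖ ≤ ‖u₀ x‖ + G x := fun n => by
    have := le_hasSum hGx n fun m _ => norm_nonneg _
    rw [hsub n, Pi.sub_apply] at this
    linarith [norm_le_norm_add_norm_sub' (u n x) (u₀ x)]
  have hG0 : 0 ≤ G x := hGx.nonneg fun n => norm_nonneg _
  refine ⟨fun n w hw => ?_, fun w hw => ?_⟩
  · nlinarith [hgrowth _ (ht n) x hx _ (hux n) w hw, Real.le_norm_self (α x),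
      mul_le_mul_of_nonneg_left (hle n) hc]
  · nlinarith [hgrowth _ ht₀ x hx _ hu₀x w hw, Real.le_norm_self (α x)]

theorem nemytskii_operator_husc_general
    {M N : ℕ}
    (Ω : Set (EuclideanSpace ℝ (Fin M))) (hΩne : Ω.Nonempty)
    (hΩopen : IsOpen Ω)
    (K : Set (EuclideanSpace ℝ (Fin N))) (hKne : K.Nonempty)
    (hKcl : IsClosed K)
    (φ : ℝ → EuclideanSpace ℝ (Fin M) → EuclideanSpace ℝ (Fin N) →
      Set (EuclideanSpace ℝ (Fin N)))
    (hφne : ∀ t ∈ Set.Icc (0:ℝ) 1, ∀ x ∈ Ω, ∀ y ∈ K, (φ t x y).Nonempty)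
    (hφconv : ∀ t ∈ Set.Icc (0:ℝ) 1, ∀ x ∈ Ω, ∀ y ∈ K, Convex ℝ (φ t x y))
    (hφcpt : ∀ t ∈ Set.Icc (0:ℝ) 1, ∀ x ∈ Ω, ∀ y ∈ K, IsCompact (φ t x y))
    (hφusc : ∀ t₀ ∈ Set.Icc (0:ℝ) 1, ∀ x₀ ∈ Ω, ∀ y₀ ∈ K,
      ∀ V : Set (EuclideanSpace ℝ (Fin N)), IsOpen V → φ t₀ x₀ y₀ ⊆ V →
        ∃ δ > (0:ℝ), ∀ t ∈ Set.Icc (0:ℝ) 1, ∀ x ∈ Ω, ∀ y ∈ K,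
          |t - t₀| < δ → ‖x - x₀‖ < δ → ‖y - y₀‖ < δ → φ t x y ⊆ V)
    (α : EuclideanSpace ℝ (Fin M) → ℝ)
    (hα : MemLp α 2 (volume.restrict Ω)) (c : ℝ) (hc : 0 < c)
    (hgrowth : ∀ t ∈ Set.Icc (0:ℝ) 1, ∀ x ∈ Ω, ∀ y ∈ K, ∀ v ∈ φ t x y,
      ‖v‖ ≤ α x + c * ‖y‖)
    -- the constraint set in L² and the Nemytskii operator
    (𝓚 : Set (Lp (EuclideanSpace ℝ (Fin N)) 2 (volume.restrict Ω)))
    (h𝓚 : 𝓚 = {u : Lp (EuclideanSpace ℝ (Fin N)) 2 (volume.restrict Ω) |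
      ∀ᵐ x ∂(volume.restrict Ω), u x ∈ K})
    (F : ℝ → Lp (EuclideanSpace ℝ (Fin N)) 2 (volume.restrict Ω) →
      Set (Lp (EuclideanSpace ℝ (Fin N)) 2 (volume.restrict Ω)))
    (hF : ∀ t u, F t u = {v : Lp (EuclideanSpace ℝ (Fin N)) 2 (volume.restrict Ω) |
      ∀ᵐ x ∂(volume.restrict Ω), v x ∈ φ t x (u x)}) :
    ∀ t₀ ∈ Set.Icc (0:ℝ) 1, ∀ u₀ ∈ 𝓚, ∀ ε > (0:ℝ), ∃ δ > (0:ℝ),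
      ∀ t ∈ Set.Icc (0:ℝ) 1, ∀ u ∈ 𝓚, |t - t₀| < δ → ‖u - u₀‖ < δ →
        ∀ v ∈ F t u, ∃ v' ∈ F t₀ u₀, ‖v - v'‖ < ε := by
  intro t₀ ht₀ u₀ hu₀ ε hε
  subst h𝓚
  by_contra! hfar
  choose t ht u hu htt₀ huu₀ v hv hvfar using fun n : ℕ => hfar ((1 / 2) ^ n) (by positivity)
  simp only [hF, mem_ofPred_eq] at hv hvfar hu hu₀
  have hsum : Summable fun n => ‖u n - u₀‖ :=
    summable_geometric_two.of_nonneg_of_le (fun _ => norm_nonneg _) fun n => (huu₀ n).le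
  have ht_lim : Tendsto t atTop (𝓝 t₀) := tendsto_iff_norm_sub_tendsto_zero.2 <|
    squeeze_zero (fun _ => norm_nonneg _) (fun n => (htt₀ n).le)
      (tendsto_pow_atTop_nhds_zero_of_lt_one (by norm_num) (by norm_num))
  have hΩae : ∀ᵐ x ∂(volume.restrict Ω), x ∈ Ω := ae_restrict_mem hΩopen.measurableSet
  obtain ⟨B, hB, hbound⟩ := exists_memLp_bound_of_growth hgrowth hα hc.le hΩae ht ht₀ hu hu₀ hsum
  obtain ⟨v', hv', hlim⟩ := exists_selection_tendsto_norm_sub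
    (measurableSet_Icc.prod (hΩopen.measurableSet.prod hKcl.measurableSet))
    ((nonempty_Icc.2 zero_le_one).prod (hΩne.prod hKne))
    (Φ := fun q => φ q.1 q.2.1 q.2.2) (fun q hq => hφne _ hq.1 _ hq.2.1 _ hq.2.2)
    (fun q hq => (hφcpt _ hq.1 _ hq.2.1 _ hq.2.2).isClosed)
    (fun q hq => hφconv _ hq.1 _ hq.2.1 _ hq.2.2)
    (eventually_nhdsWithin_subset_thickening hφusc) ENNReal.ofNat_ne_top
    (ρ := fun n x => (t n, x, u n x)) (ρ₀ := fun x => (t₀, x, u₀ x))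
    (measurable_const.prodMk (measurable_id.prodMk (Lp.stronglyMeasurable u₀).measurable))
    (by filter_upwards [hΩae, hu₀] with x hx hx' using ⟨ht₀, hx, hx'⟩)
    (by
      filter_upwards [hΩae, ae_all_iff.2 hu, Lp.ae_tendsto_of_summable_norm_sub hsum]
        with x hx hux hlimx
      exact tendsto_nhdsWithin_iff.2 ⟨ht_lim.prodMk_nhds (tendsto_const_nhds.prodMk_nhds hlimx),
        Eventually.of_forall fun n => ⟨ht n, hx, hux n⟩⟩)
    hB hbound hv
  obtain ⟨n, hn⟩ := (hlim.eventually (gt_mem_nhds hε)).exists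
  exact (hvfar n (v' n) (hv' n)).not_gt hn

/-- Let `Ω ⊆ ℝ^M` be nonempty bounded open, `K ⊆ ℝ^N` nonempty closed
convex, and `φ` usc with convex compact values satisfying `|v| ≤ α(x) + c|y|` with
`α ∈ L²(Ω)`.  Then the Nemytskii operator
`F(t,u) = {v ∈ L²(Ω,ℝ^N) : v(x) ∈ φ(t,x,u(x)) a.e.}` is Hausdorff upper semicontinuous in
both variables on `[0,1] × 𝓚`, where `𝓚 = {u ∈ L²(Ω,ℝ^N) : u(x) ∈ K a.e.}`. -/
theorem nemytskii_operator_husc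
    {M N : ℕ}
    (Ω : Set (EuclideanSpace ℝ (Fin M))) (hΩne : Ω.Nonempty)
    (hΩbdd : Bornology.IsBounded Ω) (hΩopen : IsOpen Ω)
    (K : Set (EuclideanSpace ℝ (Fin N))) (hKne : K.Nonempty)
    (hKcl : IsClosed K) (hKconv : Convex ℝ K)
    (φ : ℝ → EuclideanSpace ℝ (Fin M) → EuclideanSpace ℝ (Fin N) →
      Set (EuclideanSpace ℝ (Fin N)))
    (hφne : ∀ t ∈ Set.Icc (0:ℝ) 1, ∀ x ∈ Ω, ∀ y ∈ K, (φ t x y).Nonempty)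
    (hφconv : ∀ t ∈ Set.Icc (0:ℝ) 1, ∀ x ∈ Ω, ∀ y ∈ K, Convex ℝ (φ t x y))
    (hφcpt : ∀ t ∈ Set.Icc (0:ℝ) 1, ∀ x ∈ Ω, ∀ y ∈ K, IsCompact (φ t x y))
    (hφusc : ∀ t₀ ∈ Set.Icc (0:ℝ) 1, ∀ x₀ ∈ Ω, ∀ y₀ ∈ K,
      ∀ V : Set (EuclideanSpace ℝ (Fin N)), IsOpen V → φ t₀ x₀ y₀ ⊆ V →
        ∃ δ > (0:ℝ), ∀ t ∈ Set.Icc (0:ℝ) 1, ∀ x ∈ Ω, ∀ y ∈ K,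
          |t - t₀| < δ → ‖x - x₀‖ < δ → ‖y - y₀‖ < δ → φ t x y ⊆ V)
    (α : EuclideanSpace ℝ (Fin M) → ℝ)
    (hα : MemLp α 2 (volume.restrict Ω)) (c : ℝ) (hc : 0 < c)
    (hgrowth : ∀ t ∈ Set.Icc (0:ℝ) 1, ∀ x ∈ Ω, ∀ y ∈ K, ∀ v ∈ φ t x y,
      ‖v‖ ≤ α x + c * ‖y‖)
    -- the constraint set in L² and the Nemytskii operator
    (𝓚 : Set (Lp (EuclideanSpace ℝ (Fin N)) 2 (volume.restrict Ω)))
    (h𝓚 : 𝓚 = {u : Lp (EuclideanSpace ℝ (Fin N)) 2 (volume.restrict Ω) |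
      ∀ᵐ x ∂(volume.restrict Ω), u x ∈ K})
    (F : ℝ → Lp (EuclideanSpace ℝ (Fin N)) 2 (volume.restrict Ω) →
      Set (Lp (EuclideanSpace ℝ (Fin N)) 2 (volume.restrict Ω)))
    (hF : ∀ t u, F t u = {v : Lp (EuclideanSpace ℝ (Fin N)) 2 (volume.restrict Ω) |
      ∀ᵐ x ∂(volume.restrict Ω), v x ∈ φ t x (u x)}) :
    ∀ t₀ ∈ Set.Icc (0:ℝ) 1, ∀ u₀ ∈ 𝓚, ∀ ε > (0:ℝ), ∃ δ > (0:ℝ),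
      ∀ t ∈ Set.Icc (0:ℝ) 1, ∀ u ∈ 𝓚, |t - t₀| < δ → ‖u - u₀‖ < δ →
        ∀ v ∈ F t u, ∃ v' ∈ F t₀ u₀, ‖v - v'‖ < ε :=
  nemytskii_operator_husc_general Ω hΩne hΩopen K hKne hKcl φ hφne hφconv hφcpt hφusc α hα c hc
    hgrowth 𝓚 h𝓚 F hF
end
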